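/- arXiv:2506.06246 — 8 statements merged into one kernel-verified Lean document; each statement's English description precedes it below -/
import Mathlib

section
/- Let p be a prime, k a perfect field of characteristic p, d ≥ 1, n ≥ 0, A := k[t₁,…,t_d], A_{n+1} := W_{n+1}(k)[t₁,…,t_d], and let w̃_n : W_{n+1}(A) → A_{n+1} be the canonical injective ring homomorphism (f₁,…,f_{n+1}) ↦ Σ_{i=0}^n pⁱ·f̃_{i+1}^{p^{n−i}}. Let S ⊂ ℕ^d be a finite set and (a_𝐫)_{𝐫∈S} a family of elements of A_{n+1}. Then the operator Σ_{𝐫∈S} a_𝐫·∂^{[𝐫]} annihilates w̃_n(W_{n+1}(A)), i.e. (Σ_{𝐫∈S} a_𝐫·∂^{[𝐫]}) ∘ w̃_n = 0, if and only if a_𝟎 = 0 (in case 𝟎 ∈ S) and a_𝐫 ∈ p^{v_p(𝐫)+1}·A_{n+1} for every 𝐫 ∈ S with 𝐫 ≠ 𝟎. -/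
/-- The multivariate Hasse derivative `∂^{[𝐛]}` on `R[t₁,…,t_d]`: it sends a monomial `t^𝐞` to
`(∏ⱼ binom(eⱼ, bⱼ)) · t^{𝐞−𝐛}`; it is the composite of the one-variable Hasse derivatives
`∂ⱼ^{[bⱼ]}` in the separate variables. -/
noncomputable def mvHasseDeriv {d : ℕ} {R : Type*} [CommRing R] (b : Fin d →₀ ℕ)
    (f : MvPolynomial (Fin d) R) : MvPolynomial (Fin d) R :=
  ∑ e ∈ f.support,
    MvPolynomial.monomial (e - b)
      (((∏ j ∈ b.support, (e j).choose (b j) : ℕ) : R) * MvPolynomial.coeff e f)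

/-- For a nonzero `𝐫 ∈ ℕ^d`, `vpVec p 𝐫 = min { v_p(rⱼ) : rⱼ ≠ 0 }` (and `0` for `𝐫 = 0`). -/
noncomputable def vpVec (p : ℕ) {d : ℕ} (r : Fin d →₀ ℕ) : ℕ :=
  sInf ((fun j => padicValNat p (r j)) '' {j | r j ≠ 0})


open Nat

section NatLemmas

variable {p : ℕ}

/-- Key divisibility: if `p^μ ∣ N` and `r ≠ 0`, then `p^(μ - v_p(r)) ∣ C(N, r)`. -/
theorem pow_sub_padic_dvd_choose (hp : p.Prime) {N r μ : ℕ} (hN : p ^ μ ∣ N) (hr : r ≠ 0) :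
    p ^ (μ - padicValNat p r) ∣ N.choose r := by
  rcases Nat.eq_zero_or_pos N with rfl | hNpos
  · rcases Nat.pos_of_ne_zero hr with h
    simp [Nat.choose_eq_zero_of_lt h]
  set v := padicValNat p r with hv
  rcases le_or_gt μ v with h | h
  · simpa [Nat.sub_eq_zero_of_le h] using one_dvd _
  -- p^μ ∣ r * C(N, r)
  have key : p ^ μ ∣ r * N.choose r := by
    obtain ⟨N', rfl⟩ : ∃ N', N = N' + 1 := ⟨N - 1, by omega⟩
    obtain ⟨r', rfl⟩ : ∃ r', r = r' + 1 := ⟨r - 1, by omega⟩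
    have hid : (N' + 1) * N'.choose r' = (N' + 1).choose (r' + 1) * (r' + 1) :=
      Nat.add_one_mul_choose_eq N' r'
    have : p ^ μ ∣ (N' + 1) * N'.choose r' := hN.mul_right _
    rw [hid] at this
    rwa [mul_comm]
  -- split r = p^v * m with ¬ p ∣ m
  have hpvr : p ^ v ∣ r := by
    rw [hv]; exact pow_padicValNat_dvd
  obtain ⟨m, hm⟩ := hpvr
  have hmne : m ≠ 0 := by rintro rfl; simp at hm; exact hr hm
  have hnd : ¬ p ∣ m := by
    intro hdvd
    obtain ⟨m', rfl⟩ := hdvd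
    have hdv : p ^ (v + 1) ∣ r := by rw [hm, pow_succ]; exact ⟨m', by ring⟩
    haveI := Fact.mk hp
    have hle := (padicValNat_dvd_iff_le hr).mp hdv
    omega
  have key2 : p ^ v * p ^ (μ - v) ∣ p ^ v * (m * N.choose r) := by
    rw [← pow_add]
    have : v + (μ - v) = μ := by omega
    rw [this]
    calc p ^ μ ∣ r * N.choose r := key
      _ = p ^ v * (m * N.choose r) := by rw [hm]; ring
  have key3 : p ^ (μ - v) ∣ m * N.choose r :=
    (mul_dvd_mul_iff_left (pow_ne_zero v hp.pos.ne')).mp key2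
  exact (Nat.Coprime.pow_left _ ((Nat.Prime.coprime_iff_not_dvd hp).mpr hnd)).dvd_of_dvd_mul_left key3

/-- Trinomial revision: `C(a+b, b) * C(M, a+b) = C(M, b) * C(M-b, a)`. -/
theorem choose_trinomial (M a b : ℕ) :
    (a + b).choose b * M.choose (a + b) = M.choose b * (M - b).choose a := by
  rcases lt_or_ge M b with h | hbM
  · rw [Nat.choose_eq_zero_of_lt h, Nat.choose_eq_zero_of_lt (show M < a + b by omega), mul_zero,
      zero_mul]
  rcases lt_or_ge M (a + b) with h | habM
  · rw [Nat.choose_eq_zero_of_lt h, Nat.choose_eq_zero_of_lt (show M - b < a by omega), mul_zero,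
      mul_zero]
  -- now b ≤ a + b ≤ M
  apply Nat.eq_of_mul_eq_mul_right (Nat.mul_pos (Nat.mul_pos a.factorial_pos b.factorial_pos)
    (M - a - b).factorial_pos)
  have h1 : (a + b).choose b * b.factorial * a.factorial = (a + b).factorial := by
    have := Nat.choose_mul_factorial_mul_factorial (show b ≤ a + b by omega)
    simpa [Nat.add_sub_cancel] using this
  have h2 : M.choose (a + b) * (a + b).factorial * (M - a - b).factorial = M.factorial := by
    have := Nat.choose_mul_factorial_mul_factorial habM
    have hsub : M - (a + b) = M - a - b := by omega
    rw [hsub] at this; exact this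
  have h3 : M.choose b * b.factorial * (M - b).factorial = M.factorial :=
    Nat.choose_mul_factorial_mul_factorial hbM
  have h4 : (M - b).choose a * a.factorial * (M - b - a).factorial = (M - b).factorial :=
    Nat.choose_mul_factorial_mul_factorial (by omega)
  have hsub2 : M - b - a = M - a - b := by omega
  calc (a + b).choose b * M.choose (a + b) * (a.factorial * b.factorial * (M - a - b).factorial)
      = ((a + b).choose b * b.factorial * a.factorial) *
        (M.choose (a + b) * (M - a - b).factorial) := by ring
    _ = (a + b).factorial * (M.choose (a + b) * (M - a - b).factorial) := by rw [h1]
    _ = M.choose (a + b) * (a + b).factorial * (M - a - b).factorial := by ring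
    _ = M.factorial := h2
    _ = M.choose b * b.factorial * (M - b).factorial := h3.symm
    _ = M.choose b * b.factorial * ((M - b).choose a * a.factorial * (M - b - a).factorial) := by
        rw [h4]
    _ = M.choose b * (M - b).choose a * (a.factorial * b.factorial * (M - a - b).factorial) := by
        rw [hsub2]; ring

end NatLemmas


open Nat

variable {p : ℕ} [Fact p.Prime]

theorem lucas_shift : ∀ (M : ℕ) (q s K : ℕ), q < p ^ M → s < p ^ M →
    (q + p ^ M * K).choose s ≡ q.choose s [MOD p] := by
  intro M
  induction M with
  | zero =>
    intro q s K hq hs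
    have hq0 : q = 0 := by simpa using hq
    have hs0 : s = 0 := by simpa using hs
    subst hq0; subst hs0
    simp [Nat.choose_zero_right, Nat.ModEq.refl]
  | succ M ih =>
    intro q s K hq hs
    have hppos : 0 < p := (Fact.out : p.Prime).pos
    have h1 : (q + p ^ (M + 1) * K).choose s ≡
        ((q + p ^ (M + 1) * K) % p).choose (s % p) *
          ((q + p ^ (M + 1) * K) / p).choose (s / p) [MOD p] :=
      Choose.choose_modEq_choose_mod_mul_choose_div_nat
    have hrw : q + p ^ (M + 1) * K = q + p * (p ^ M * K) := by ring
    have hmod : (q + p * (p ^ M * K)) % p = q % p := Nat.add_mul_mod_self_left q p (p ^ M * K)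
    have hdiv : (q + p * (p ^ M * K)) / p = q / p + p ^ M * K :=
      Nat.add_mul_div_left q (p ^ M * K) hppos
    rw [hrw, hmod, hdiv] at h1
    have hqp : q / p < p ^ M := by
      rw [Nat.div_lt_iff_lt_mul hppos]
      calc q < p ^ (M + 1) := hq
        _ = p ^ M * p := by rw [pow_succ]
    have hsp : s / p < p ^ M := by
      rw [Nat.div_lt_iff_lt_mul hppos]
      calc s < p ^ (M + 1) := hs
        _ = p ^ M * p := by rw [pow_succ]
    have h2 := (ih (q / p) (s / p) K hqp hsp).mul_left ((q % p).choose (s % p))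
    have h3 : (q % p).choose (s % p) * (q / p).choose (s / p) ≡ q.choose s [MOD p] :=
      Choose.choose_modEq_choose_mod_mul_choose_div_nat.symm
    rw [hrw]
    calc (q + p * (p ^ M * K)).choose s
        ≡ (q % p).choose (s % p) * (q / p + p ^ M * K).choose (s / p) [MOD p] := h1
      _ ≡ (q % p).choose (s % p) * (q / p).choose (s / p) [MOD p] := h2
      _ ≡ q.choose s [MOD p] := h3

theorem lucas_scale : ∀ (c N s : ℕ), (p ^ c * N).choose (p ^ c * s) ≡ N.choose s [MOD p] := by
  intro c
  induction c with
  | zero => intro N s; simp [Nat.ModEq.refl]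
  | succ c ih =>
    intro N s
    have hppos : 0 < p := (Fact.out : p.Prime).pos
    have h1 : (p ^ (c + 1) * N).choose (p ^ (c + 1) * s) ≡
        ((p ^ (c + 1) * N) % p).choose ((p ^ (c + 1) * s) % p) *
          ((p ^ (c + 1) * N) / p).choose ((p ^ (c + 1) * s) / p) [MOD p] :=
      Choose.choose_modEq_choose_mod_mul_choose_div_nat
    have e1 : p ^ (c + 1) * N = p * (p ^ c * N) := by ring
    have e2 : p ^ (c + 1) * s = p * (p ^ c * s) := by ring
    have m1 : (p * (p ^ c * N)) % p = 0 := Nat.mul_mod_right p _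
    have m2 : (p * (p ^ c * s)) % p = 0 := Nat.mul_mod_right p _
    have d1 : (p * (p ^ c * N)) / p = p ^ c * N := Nat.mul_div_cancel_left _ hppos
    have d2 : (p * (p ^ c * s)) / p = p ^ c * s := Nat.mul_div_cancel_left _ hppos
    rw [e1, e2, m1, m2, d1, d2] at h1
    have h2 : Nat.choose 0 0 * (p ^ c * N).choose (p ^ c * s) ≡ N.choose s [MOD p] := by
      simpa using ih N s
    rw [e1, e2]
    exact h1.trans h2


open Function

section Witt

variable {p : ℕ} [hp : Fact p.Prime] {k : Type*} [Field k] [CharP k p] [PerfectRing k p]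

local notation "W" => WittVector p k

theorem witt_mul_pow_p (b : W) (m : ℕ) :
    b * (p : W) ^ m = (WittVector.verschiebung)^[m] ((WittVector.frobenius)^[m] b) := by
  induction m with
  | zero => simp
  | succ m ih =>
    have h1 : b * (p : W) ^ (m + 1) = (b * (p : W) ^ m) * p := by ring
    rw [h1, ih, ← WittVector.verschiebung_frobenius]
    have h2 := (WittVector.verschiebung_frobenius_comm (p := p) (R := k)).iterate_left m
    have h3 : WittVector.frobenius ((WittVector.verschiebung)^[m] ((WittVector.frobenius)^[m] b))
        = (WittVector.verschiebung)^[m] (WittVector.frobenius ((WittVector.frobenius)^[m] b)) :=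
      (h2 _).symm
    rw [h3, ← Function.iterate_succ_apply' (WittVector.frobenius (p := p)),
      ← Function.iterate_succ_apply' (WittVector.verschiebung (p := p))]

theorem witt_coeff_mul_pow_p (b : W) (m : ℕ) :
    (b * (p : W) ^ m).coeff m = b.coeff 0 ^ p ^ m := by
  rw [witt_mul_pow_p]
  have h1 : ((WittVector.verschiebung)^[m] ((WittVector.frobenius)^[m] b)).coeff (0 + m) =
      ((WittVector.frobenius)^[m] b).coeff 0 := WittVector.iterate_verschiebung_coeff _ _ _
  rw [Nat.zero_add] at h1
  rw [h1, WittVector.iterate_frobenius_coeff]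

theorem witt_eq_pow_mul_of_coeff_eq_zero {x : W} {n : ℕ} (hx : ∀ i ≤ n, x.coeff i = 0) :
    ∃ y, x = (p : W) ^ (n + 1) * y := by
  rcases eq_or_ne x 0 with rfl | hx0
  · exact ⟨0, by simp⟩
  obtain ⟨m, b, hb0, rfl⟩ := WittVector.exists_eq_pow_p_mul x hx0
  have hm : n + 1 ≤ m := by
    by_contra hlt
    push_neg at hlt
    have h1 : ((p : W) ^ m * b).coeff m = b.coeff 0 ^ p ^ m := by
      rw [mul_comm]; exact witt_coeff_mul_pow_p b m
    have h2 := hx m (by omega)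
    rw [h1] at h2
    exact pow_ne_zero _ hb0 h2
  exact ⟨(p : W) ^ (m - (n + 1)) * b, by rw [← mul_assoc, ← pow_add]; congr 2; omega⟩

variable (n : ℕ)

local notation "R'" => TruncatedWittVector p (n + 1) k
local notation "T" => WittVector.truncate (p := p) (R := k) (n + 1)

theorem trunc_p_pow_zero : ((p : R')) ^ (n + 1) = 0 := by
  have h1 : ((p : R')) ^ (n + 1) = T ((p : W) ^ (n + 1)) := by
    rw [map_pow, map_natCast]
  rw [h1, ← RingHom.mem_ker, WittVector.mem_ker_truncate]
  intro i hi
  exact WittVector.coeff_p_pow_eq_zero (R := k) (p := p) (i := n + 1) (j := i) (by omega)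

theorem trunc_cancel {i : ℕ} (hi : i ≤ n + 1) {x : R'} (hx : (p : R') ^ i * x = 0) :
    ∃ y, x = (p : R') ^ (n + 1 - i) * y := by
  obtain ⟨xh, rfl⟩ := WittVector.truncate_surjective p (n + 1) k x
  have h1 : T ((p : W) ^ i * xh) = 0 := by
    rw [map_mul, map_pow, map_natCast]; exact hx
  rw [← RingHom.mem_ker, WittVector.mem_ker_truncate] at h1
  obtain ⟨y, hy⟩ := witt_eq_pow_mul_of_coeff_eq_zero (x := (p : W) ^ i * xh)
    (fun j hj => h1 j (Nat.lt_succ_of_le hj))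
  have hpne : ((p : W)) ≠ 0 := WittVector.p_nonzero p k
  have h2 : (p : W) ^ i * xh = (p : W) ^ i * ((p : W) ^ (n + 1 - i) * y) := by
    have hii : i + (n + 1 - i) = n + 1 := by omega
    rw [hy, ← mul_assoc, ← pow_add, hii]
  have h3 : xh = (p : W) ^ (n + 1 - i) * y :=
    mul_left_cancel₀ (pow_ne_zero _ hpne) h2
  exact ⟨T y, by rw [h3, map_mul, map_pow, map_natCast]⟩

theorem trunc_out_truncate (x : R') : T x.out = x := by
  have h := TruncatedWittVector.truncateFun_out x
  exact h

theorem trunc_p_dvd_of_coeff_zero {x : R'} (hx : x.coeff 0 = 0) :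
    ∃ y, x = (p : R') * y := by
  rcases eq_or_ne x.out 0 with h0 | h0
  · refine ⟨0, ?_⟩
    have : x = T x.out := (trunc_out_truncate n x).symm
    rw [this, h0, map_zero, mul_zero]
  obtain ⟨m, b, hb0, hmb⟩ := WittVector.exists_eq_pow_p_mul x.out h0
  have hm : m ≠ 0 := by
    rintro rfl
    rw [pow_zero, one_mul] at hmb
    have := TruncatedWittVector.coeff_out x (0 : Fin (n + 1))
    rw [hmb] at this
    rw [hx] at this
    exact hb0 this
  refine ⟨T ((p : W) ^ (m - 1) * b), ?_⟩
  have hmm : (p : W) ^ m = (p : W) * (p : W) ^ (m - 1) := by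
    conv_lhs => rw [show m = 1 + (m - 1) by omega]
    rw [pow_add, pow_one]
  have hmb2 : x.out = (p : W) * ((p : W) ^ (m - 1) * b) := by
    rw [hmb, hmm, mul_assoc]
  have hx2 : x = T x.out := (trunc_out_truncate n x).symm
  rw [hx2, hmb2, map_mul, map_natCast]

end Witt

open MvPolynomial Finset

section Hasse

variable {d : ℕ} {B : Type*} [CommRing B]

theorem mvHasseDeriv_coeff (b e : Fin d →₀ ℕ) (f : MvPolynomial (Fin d) B) :
    (mvHasseDeriv b f).coeff e
      = ((∏ j, ((e + b) j).choose (b j) : ℕ) : B) * f.coeff (e + b) := by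
  unfold mvHasseDeriv
  rw [MvPolynomial.coeff_sum]
  have hsum := Finset.sum_eq_single (f := fun e' =>
      (MvPolynomial.monomial (e' - b)
        (((∏ j ∈ b.support, (e' j).choose (b j) : ℕ) : B) * f.coeff e')).coeff e)
    (s := f.support) (e + b)
    (by
      intro e' _ hne
      simp only [MvPolynomial.coeff_monomial]
      by_cases hsub : e' - b = e
      · rw [if_pos hsub]
        have hex : ∃ j, e' j < b j := by
          by_contra hc
          push_neg at hc
          apply hne
          ext j
          have h1 : (e' - b) j = e' j - b j := Finsupp.tsub_apply e' b j
          have h2 : (e' - b) j = e j := by rw [hsub]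
          have h3 := hc j
          have h4 : (e + b) j = e j + b j := Finsupp.add_apply e b j
          omega
        obtain ⟨j, hj⟩ := hex
        have hmem : j ∈ b.support := by
          rw [Finsupp.mem_support_iff]; omega
        have hzero : (∏ j ∈ b.support, (e' j).choose (b j) : ℕ) = 0 :=
          Finset.prod_eq_zero hmem (Nat.choose_eq_zero_of_lt hj)
        rw [hzero]
        simp
      · rw [if_neg hsub])
    (by
      intro hnot
      simp only [MvPolynomial.notMem_support_iff.mp hnot]
      simp)
  rw [hsum]
  simp only [MvPolynomial.coeff_monomial, if_pos (add_tsub_cancel_right e b)]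
  congr 2
  exact Finset.prod_subset (Finset.subset_univ _) (fun j _ hj => by
    rw [Finsupp.notMem_support_iff.mp hj, Nat.choose_zero_right])

theorem mvHasseDeriv_add (b : Fin d →₀ ℕ) (f g : MvPolynomial (Fin d) B) :
    mvHasseDeriv b (f + g) = mvHasseDeriv b f + mvHasseDeriv b g := by
  apply MvPolynomial.ext
  intro e
  simp [mvHasseDeriv_coeff, MvPolynomial.coeff_add, mul_add]

theorem mvHasseDeriv_zero' (b : Fin d →₀ ℕ) :
    mvHasseDeriv b (0 : MvPolynomial (Fin d) B) = 0 := by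
  apply MvPolynomial.ext
  intro e
  simp [mvHasseDeriv_coeff]

theorem mvHasseDeriv_C_mul (b : Fin d →₀ ℕ) (c : B) (f : MvPolynomial (Fin d) B) :
    mvHasseDeriv b (C c * f) = C c * mvHasseDeriv b f := by
  apply MvPolynomial.ext
  intro e
  simp only [mvHasseDeriv_coeff, MvPolynomial.coeff_C_mul]
  ring

theorem mvHasseDeriv_smul (b : Fin d →₀ ℕ) (c : B) (f : MvPolynomial (Fin d) B) :
    mvHasseDeriv b (c • f) = c • mvHasseDeriv b f := by
  rw [MvPolynomial.smul_eq_C_mul, MvPolynomial.smul_eq_C_mul, mvHasseDeriv_C_mul]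

theorem mvHasseDeriv_sum {ι : Type*} (b : Fin d →₀ ℕ) (s : Finset ι)
    (F : ι → MvPolynomial (Fin d) B) :
    mvHasseDeriv b (∑ i ∈ s, F i) = ∑ i ∈ s, mvHasseDeriv b (F i) := by
  classical
  induction s using Finset.induction_on with
  | empty => simp [mvHasseDeriv_zero']
  | insert _ _ h ih =>
    rw [Finset.sum_insert h, Finset.sum_insert h, mvHasseDeriv_add, ih]

/-- The test polynomial `∏ⱼ (1 + Xⱼ)^(M j)`. -/
noncomputable def Gpoly (B : Type*) [CommRing B] {d : ℕ} (M : Fin d → ℕ) :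
    MvPolynomial (Fin d) B :=
  ∏ j, (1 + X j) ^ (M j)

theorem Gpoly_coeff_aux :
    ∀ (t : ℕ) (M : Fin d → ℕ), (∑ j, M j) = t → ∀ e : Fin d →₀ ℕ,
      (Gpoly B M).coeff e = ((∏ j, (M j).choose (e j) : ℕ) : B) := by
  intro t
  induction t using Nat.strong_induction_on with
  | _ t ih =>
    intro M hM e
    rcases Nat.eq_zero_or_pos t with rfl | htpos
    · have hM0 : ∀ j, M j = 0 := by
        intro j
        have := Finset.sum_eq_zero_iff.mp hM j (Finset.mem_univ j)
        exact this
      have hG : Gpoly B M = 1 := by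
        unfold Gpoly
        rw [Finset.prod_congr rfl (fun j _ => by rw [hM0 j, pow_zero])]
        simp
      rw [hG]
      by_cases he : e = 0
      · subst he
        simp [MvPolynomial.coeff_one]
      · have hej : ∃ j, e j ≠ 0 := by
          by_contra hc
          push_neg at hc
          exact he (Finsupp.ext hc)
        obtain ⟨j, hj⟩ := hej
        have h1 : MvPolynomial.coeff e (1 : MvPolynomial (Fin d) B) = 0 := by
          rw [MvPolynomial.coeff_one, if_neg (by
            intro hcon
            exact hj (by rw [← hcon]; rfl))]
        have h2 : (∏ j, (M j).choose (e j) : ℕ) = 0 :=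
          Finset.prod_eq_zero (Finset.mem_univ j)
            (by rw [hM0 j]; exact Nat.choose_eq_zero_of_lt (by omega))
        rw [h1, h2]
        simp
    · -- pick j₀ with M j₀ > 0
      have hex : ∃ j₀, M j₀ ≠ 0 := by
        by_contra hc
        push_neg at hc
        rw [Finset.sum_eq_zero (fun j _ => hc j)] at hM
        omega
      obtain ⟨j₀, hj₀⟩ := hex
      set M' : Fin d → ℕ := Function.update M j₀ (M j₀ - 1) with hM'
      have hMj : ∀ j, M j = if j = j₀ then M' j + 1 else M' j := by
        intro j
        by_cases hjj : j = j₀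
        · subst hjj; rw [if_pos rfl, hM', Function.update_self]; omega
        · rw [if_neg hjj, hM', Function.update_of_ne hjj]
      have hsum' : (∑ j, M' j) = t - 1 := by
        have hMj2 : ∀ j, M j = M' j + (if j = j₀ then 1 else 0) := by
          intro j
          rw [hMj j]
          by_cases hjj : j = j₀ <;> simp [hjj]
        have h1 : (∑ j, M j) = (∑ j, M' j) + 1 := by
          rw [Finset.sum_congr rfl (fun j _ => hMj2 j), Finset.sum_add_distrib,
            Finset.sum_ite_eq' Finset.univ j₀ (fun _ => 1)]
          simp
        omega
      -- G M = (1 + X j₀) * G M'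
      have hGsplit : Gpoly B M = (1 + X j₀) * Gpoly B M' := by
        unfold Gpoly
        rw [← Finset.mul_prod_erase Finset.univ _ (Finset.mem_univ j₀),
          ← Finset.mul_prod_erase Finset.univ (fun j => (1 + X j) ^ M' j) (Finset.mem_univ j₀)]
        have e3 : (∏ j ∈ Finset.univ.erase j₀, (1 + X j) ^ M j)
            = ∏ j ∈ Finset.univ.erase j₀, ((1 + X j : MvPolynomial (Fin d) B)) ^ M' j := by
          apply Finset.prod_congr rfl
          intro j hj
          rw [hMj j, if_neg (Finset.ne_of_mem_erase hj)]
        rw [e3, hMj j₀, if_pos rfl, pow_succ]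
        ring
      rw [hGsplit, add_mul, one_mul]
      rw [MvPolynomial.coeff_add]
      have ihM' := ih (t - 1) (by omega) M' hsum'
      rw [ihM' e]
      rw [MvPolynomial.coeff_X_mul' e j₀]
      -- assemble
      by_cases hej : j₀ ∈ e.support
      · rw [if_pos hej, ihM' _]
        have he0 : e j₀ ≠ 0 := Finsupp.mem_support_iff.mp hej
        -- identity of products
        rw [← Nat.cast_add]
        congr 1
        have hsingle : ∀ j, ((e - Finsupp.single j₀ 1 : Fin d →₀ ℕ)) j
            = if j = j₀ then e j - 1 else e j := by
          intro j
          rw [Finsupp.tsub_apply]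
          by_cases hjj : j = j₀
          · subst hjj; rw [if_pos rfl, Finsupp.single_eq_same]
          · rw [if_neg hjj, Finsupp.single_eq_of_ne' (Ne.symm hjj)]; omega
        have A1 : (∏ j, (M' j).choose (e j))
            = (M' j₀).choose (e j₀) * ∏ j ∈ Finset.univ.erase j₀, (M' j).choose (e j) :=
          (Finset.mul_prod_erase Finset.univ _ (Finset.mem_univ j₀)).symm
        have A2 : (∏ j, (M' j).choose ((e - Finsupp.single j₀ 1 : Fin d →₀ ℕ) j))
            = (M' j₀).choose (e j₀ - 1) * ∏ j ∈ Finset.univ.erase j₀, (M' j).choose (e j) := by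
          rw [(Finset.mul_prod_erase Finset.univ _ (Finset.mem_univ j₀)).symm]
          rw [hsingle j₀, if_pos rfl]
          congr 1
          apply Finset.prod_congr rfl
          intro j hj
          rw [hsingle j, if_neg (Finset.ne_of_mem_erase hj)]
        have A3 : (∏ j, (M j).choose (e j))
            = (M' j₀ + 1).choose (e j₀) * ∏ j ∈ Finset.univ.erase j₀, (M' j).choose (e j) := by
          rw [(Finset.mul_prod_erase Finset.univ _ (Finset.mem_univ j₀)).symm]
          rw [hMj j₀, if_pos rfl]
          congr 1
          apply Finset.prod_congr rfl
          intro j hj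
          rw [hMj j, if_neg (Finset.ne_of_mem_erase hj)]
        rw [A1, A2, A3, ← add_mul]
        congr 1
        -- Pascal
        obtain ⟨s, hs⟩ : ∃ s, e j₀ = s + 1 := ⟨e j₀ - 1, by omega⟩
        rw [hs]
        have hps : (s + 1) - 1 = s := by omega
        rw [hps, Nat.choose_succ_succ]
        simp [Nat.succ_eq_add_one]
        omega
      · rw [if_neg hej, add_zero]
        have he0 : e j₀ = 0 := Finsupp.notMem_support_iff.mp hej
        congr 1
        apply Finset.prod_congr rfl
        intro j _
        by_cases hjj : j = j₀
        · subst hjj; rw [he0, Nat.choose_zero_right, Nat.choose_zero_right]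
        · rw [hMj j, if_neg hjj]

theorem Gpoly_coeff (M : Fin d → ℕ) (e : Fin d →₀ ℕ) :
    (Gpoly B M).coeff e = ((∏ j, (M j).choose (e j) : ℕ) : B) :=
  Gpoly_coeff_aux (∑ j, M j) M rfl e

end Hasse

section Filtration

variable (p : ℕ) (B : Type*) [CommRing B] (d : ℕ)

/-- Generators of the filtration submodule: `p^c · t^e` with `p^(m-c) ∣ e`. -/
def Mgen (m : ℕ) : Set (MvPolynomial (Fin d) B) :=
  {x | ∃ c ≤ m, ∃ e : Fin d →₀ ℕ, (∀ j, p ^ (m - c) ∣ e j) ∧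
    x = (p : MvPolynomial (Fin d) B) ^ c * MvPolynomial.monomial e 1}

/-- The filtration submodule `M_m = Σ_c p^c · B[t^{p^{m-c}}]`. -/
noncomputable def Msub (m : ℕ) : Submodule B (MvPolynomial (Fin d) B) :=
  Submodule.span B (Mgen p B d m)

variable {p B d}

theorem natCast_pow_eq_C (c : ℕ) :
    (p : MvPolynomial (Fin d) B) ^ c = MvPolynomial.C ((p : B) ^ c) := by
  rw [map_pow, map_natCast]

theorem mem_Msub_zero (f : MvPolynomial (Fin d) B) : f ∈ Msub p B d 0 := by
  rw [f.as_sum]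
  apply Submodule.sum_mem
  intro e _
  have h1 : (MvPolynomial.monomial e) (f.coeff e) = (f.coeff e) • (MvPolynomial.monomial e 1) := by
    rw [MvPolynomial.smul_monomial, smul_eq_mul, mul_one]
  rw [h1]
  apply Submodule.smul_mem
  apply Submodule.subset_span
  exact ⟨0, le_rfl, e, fun j => by simp, by rw [pow_zero, one_mul]⟩

theorem Mgen_mul_mem {m : ℕ} {x y : MvPolynomial (Fin d) B}
    (hx : x ∈ Mgen p B d m) (hy : y ∈ Mgen p B d m) : x * y ∈ Msub p B d m := by
  obtain ⟨c, hc, e, hdvd, rfl⟩ := hx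
  obtain ⟨c', hc', e', hdvd', rfl⟩ := hy
  have h0 : (MvPolynomial.monomial e 1 : MvPolynomial (Fin d) B) * MvPolynomial.monomial e' 1
      = MvPolynomial.monomial (e + e') 1 := by
    rw [MvPolynomial.monomial_mul, one_mul]
  have hmul : ((p : MvPolynomial (Fin d) B) ^ c * MvPolynomial.monomial e 1) *
      ((p : MvPolynomial (Fin d) B) ^ c' * MvPolynomial.monomial e' 1)
      = (p : MvPolynomial (Fin d) B) ^ (c + c') * MvPolynomial.monomial (e + e') 1 := by
    calc ((p : MvPolynomial (Fin d) B) ^ c * MvPolynomial.monomial e 1) *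
        ((p : MvPolynomial (Fin d) B) ^ c' * MvPolynomial.monomial e' 1)
        = ((p : MvPolynomial (Fin d) B) ^ c * (p : MvPolynomial (Fin d) B) ^ c') *
          (MvPolynomial.monomial e 1 * MvPolynomial.monomial e' 1) := by ring
      _ = (p : MvPolynomial (Fin d) B) ^ (c + c') * MvPolynomial.monomial (e + e') 1 := by
          rw [h0, pow_add]
  rw [hmul]
  rcases le_or_gt (c + c') m with hle | hgt
  · apply Submodule.subset_span
    refine ⟨c + c', hle, e + e', fun j => ?_, rfl⟩
    have h1 : p ^ (m - (c + c')) ∣ e j :=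
      dvd_trans (pow_dvd_pow p (by omega)) (hdvd j)
    have h2 : p ^ (m - (c + c')) ∣ e' j :=
      dvd_trans (pow_dvd_pow p (by omega)) (hdvd' j)
    rw [Finsupp.add_apply]
    exact dvd_add h1 h2
  · have hsplit : (p : MvPolynomial (Fin d) B) ^ (c + c')
        = MvPolynomial.C ((p : B) ^ (c + c' - m)) * (p : MvPolynomial (Fin d) B) ^ m := by
      rw [natCast_pow_eq_C, natCast_pow_eq_C, ← map_mul, ← pow_add]
      congr 2
      omega
    rw [hsplit, mul_assoc, ← MvPolynomial.smul_eq_C_mul]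
    apply Submodule.smul_mem
    apply Submodule.subset_span
    exact ⟨m, le_rfl, e + e', fun j => by simp, rfl⟩

theorem Msub_mul {m : ℕ} {x y : MvPolynomial (Fin d) B}
    (hx : x ∈ Msub p B d m) (hy : y ∈ Msub p B d m) : x * y ∈ Msub p B d m := by
  induction hy using Submodule.span_induction with
  | mem z hz =>
    induction hx using Submodule.span_induction with
    | mem w hw => exact Mgen_mul_mem hw hz
    | zero => rw [zero_mul]; exact Submodule.zero_mem _
    | add a b _ _ ha hb => rw [add_mul]; exact Submodule.add_mem _ ha hb
    | smul r a _ ha => rw [smul_mul_assoc]; exact Submodule.smul_mem _ _ ha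
  | zero => rw [mul_zero]; exact Submodule.zero_mem _
  | add a b _ _ ha hb => rw [mul_add]; exact Submodule.add_mem _ ha hb
  | smul r a _ ha => rw [mul_smul_comm]; exact Submodule.smul_mem _ _ ha

theorem Msub_pow_pos {m : ℕ} {x : MvPolynomial (Fin d) B} (hx : x ∈ Msub p B d m) :
    ∀ j, 1 ≤ j → x ^ j ∈ Msub p B d m := by
  intro j
  induction j with
  | zero => omega
  | succ j ih =>
    intro _
    rcases Nat.eq_zero_or_pos j with rfl | hj
    · rw [pow_one]; exact hx
    · rw [pow_succ]
      exact Msub_mul (ih hj) hx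

theorem Msub_p_mul {m : ℕ} {x : MvPolynomial (Fin d) B} (hx : x ∈ Msub p B d m) :
    (p : MvPolynomial (Fin d) B) * x ∈ Msub p B d (m + 1) := by
  induction hx using Submodule.span_induction with
  | mem z hz =>
    obtain ⟨c, hc, e, hdvd, rfl⟩ := hz
    have hps : (p : MvPolynomial (Fin d) B) *
        ((p : MvPolynomial (Fin d) B) ^ c * MvPolynomial.monomial e 1)
        = (p : MvPolynomial (Fin d) B) ^ (c + 1) * MvPolynomial.monomial e 1 := by ring
    rw [hps]
    apply Submodule.subset_span
    refine ⟨c + 1, by omega, e, fun j => ?_, rfl⟩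
    have : m + 1 - (c + 1) = m - c := by omega
    rw [this]; exact hdvd j
  | zero => rw [mul_zero]; exact Submodule.zero_mem _
  | add a b _ _ ha hb => rw [mul_add]; exact Submodule.add_mem _ ha hb
  | smul r a _ ha => rw [mul_smul_comm]; exact Submodule.smul_mem _ _ ha

theorem Mgen_pow_p (hp : p.Prime) {m : ℕ} {x : MvPolynomial (Fin d) B}
    (hx : x ∈ Mgen p B d m) : x ^ p ∈ Msub p B d (m + 1) := by
  obtain ⟨c, hc, e, hdvd, rfl⟩ := hx
  have hxp : ((p : MvPolynomial (Fin d) B) ^ c * MvPolynomial.monomial e 1) ^ p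
      = (p : MvPolynomial (Fin d) B) ^ (c * p) * MvPolynomial.monomial (p • e) 1 := by
    rw [mul_pow, MvPolynomial.monomial_pow, one_pow, ← pow_mul]
  rw [hxp]
  have hdvd2 : ∀ j, p ^ (m - c + 1) ∣ (p • e) j := by
    intro j
    have : (p • e) j = p * e j := by
      rw [Finsupp.smul_apply, smul_eq_mul]
    rw [this, pow_succ]
    calc p ^ (m - c) * p ∣ (e j) * p := mul_dvd_mul_right (hdvd j) p
      _ = p * e j := by ring
  rcases le_or_gt (c * p) (m + 1) with hle | hgt
  · apply Submodule.subset_span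
    refine ⟨c * p, hle, p • e, fun j => ?_, rfl⟩
    refine dvd_trans (pow_dvd_pow p ?_) (hdvd2 j)
    have hcp : c ≤ c * p := Nat.le_mul_of_pos_right c hp.pos
    omega
  · have hsplit : (p : MvPolynomial (Fin d) B) ^ (c * p)
        = MvPolynomial.C ((p : B) ^ (c * p - (m + 1))) * (p : MvPolynomial (Fin d) B) ^ (m + 1) := by
      rw [natCast_pow_eq_C, natCast_pow_eq_C, ← map_mul, ← pow_add]
      congr 2
      omega
    rw [hsplit, mul_assoc, ← MvPolynomial.smul_eq_C_mul]
    apply Submodule.smul_mem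
    apply Submodule.subset_span
    exact ⟨m + 1, le_rfl, p • e, fun j => by simp, rfl⟩

theorem Msub_pow_p (hp : p.Prime) {m : ℕ} {x : MvPolynomial (Fin d) B}
    (hx : x ∈ Msub p B d m) : x ^ p ∈ Msub p B d (m + 1) := by
  induction hx using Submodule.span_induction with
  | mem z hz => exact Mgen_pow_p hp hz
  | zero => rw [zero_pow hp.ne_zero]; exact Submodule.zero_mem _
  | add x y hxm hym ihx ihy =>
    rw [add_pow]
    apply Submodule.sum_mem
    intro k hk
    rw [Finset.mem_range] at hk
    rcases Nat.eq_zero_or_pos k with rfl | hk0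
    · have : x ^ 0 * y ^ (p - 0) * (Nat.choose p 0 : MvPolynomial (Fin d) B)
          = y ^ p := by simp
      rw [this]; exact ihy
    rcases eq_or_lt_of_le (Nat.lt_succ_iff.mp hk) with hkp | hkp
    · subst hkp
      have : x ^ k * y ^ (k - k) * (Nat.choose k k : MvPolynomial (Fin d) B) = x ^ k := by
        simp
      rw [this]; exact ihx
    · -- 0 < k < p
      obtain ⟨t, ht⟩ := hp.dvd_choose_self (by omega) hkp
      have hterm : x ^ k * y ^ (p - k) * (Nat.choose p k : MvPolynomial (Fin d) B)
          = (p : MvPolynomial (Fin d) B) *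
            ((t : B) • (x ^ k * y ^ (p - k))) := by
        rw [ht]
        push_cast
        rw [MvPolynomial.smul_eq_C_mul, map_natCast]
        ring
      rw [hterm]
      apply Msub_p_mul
      apply Submodule.smul_mem
      exact Msub_mul (Msub_pow_pos hxm k (by omega)) (Msub_pow_pos hym (p - k) (by omega))
  | smul r x hxm ihx =>
    rw [smul_pow]
    exact Submodule.smul_mem _ _ ihx

theorem pow_p_pow_mem (hp : p.Prime) (g : MvPolynomial (Fin d) B) (m : ℕ) :
    g ^ (p ^ m) ∈ Msub p B d m := by
  induction m with
  | zero => rw [pow_zero, pow_one]; exact mem_Msub_zero g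
  | succ m ih =>
    rw [pow_succ, pow_mul]
    exact Msub_pow_p hp ih

theorem vpVec_exists (hr : ∃ (r : Fin d →₀ ℕ), True) : True := trivial

theorem vpVec_spec {r : Fin d →₀ ℕ} (hr : r ≠ 0) :
    ∃ j₀, r j₀ ≠ 0 ∧ padicValNat p (r j₀) = vpVec p r := by
  have hne : ((fun j => padicValNat p (r j)) '' {j | r j ≠ 0}).Nonempty := by
    have : ∃ j, r j ≠ 0 := by
      by_contra hc
      push_neg at hc
      exact hr (Finsupp.ext hc)
    obtain ⟨j, hj⟩ := this
    exact ⟨_, ⟨j, hj, rfl⟩⟩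
  have := Nat.sInf_mem hne
  obtain ⟨j₀, hj₀, hv⟩ := this
  exact ⟨j₀, hj₀, hv⟩

theorem vpVec_le {r : Fin d →₀ ℕ} {j : Fin d} (hj : r j ≠ 0) :
    vpVec p r ≤ padicValNat p (r j) :=
  Nat.sInf_le ⟨j, hj, rfl⟩

theorem hasse_dvd_of_mem_Msub (hp : p.Prime) {m : ℕ} {f : MvPolynomial (Fin d) B}
    (hf : f ∈ Msub p B d m) {r : Fin d →₀ ℕ} (hr : r ≠ 0) :
    (p : MvPolynomial (Fin d) B) ^ (m - vpVec p r) ∣ mvHasseDeriv r f := by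
  induction hf using Submodule.span_induction with
  | mem z hz =>
    obtain ⟨c, hc, e, hdvd, rfl⟩ := hz
    have hCm : mvHasseDeriv r ((p : MvPolynomial (Fin d) B) ^ c * MvPolynomial.monomial e 1)
        = (p : MvPolynomial (Fin d) B) ^ c * mvHasseDeriv r (MvPolynomial.monomial e 1) := by
      rw [natCast_pow_eq_C, mvHasseDeriv_C_mul, ← natCast_pow_eq_C]
    rw [hCm]
    have hkey : (p : MvPolynomial (Fin d) B) ^ (m - c - vpVec p r)
        ∣ mvHasseDeriv r (MvPolynomial.monomial e 1) := by
      rw [natCast_pow_eq_C, MvPolynomial.C_dvd_iff_dvd_coeff]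
      intro e''
      rw [mvHasseDeriv_coeff]
      rw [MvPolynomial.coeff_monomial]
      by_cases heq : e = e'' + r
      · rw [if_pos heq, mul_one]
        obtain ⟨j₀, hj₀ne, hj₀v⟩ := vpVec_spec (p := p) hr
        have h1 : p ^ (m - c - padicValNat p (r j₀)) ∣ (e j₀).choose (r j₀) := by
          apply pow_sub_padic_dvd_choose hp (hdvd j₀) hj₀ne
        have h2 : (e j₀).choose (r j₀) ∣ ∏ j, ((e'' + r) j).choose (r j) := by
          have : (e j₀).choose (r j₀) = ((e'' + r) j₀).choose (r j₀) := by rw [← heq]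
          rw [this]
          exact Finset.dvd_prod_of_mem _ (Finset.mem_univ j₀)
        have h3 : p ^ (m - c - vpVec p r) ∣ ∏ j, ((e'' + r) j).choose (r j) := by
          rw [← hj₀v]
          exact dvd_trans h1 h2
        calc ((p : B)) ^ (m - c - vpVec p r) = ((p ^ (m - c - vpVec p r) : ℕ) : B) := by
              push_cast; ring
          _ ∣ ((∏ j, ((e'' + r) j).choose (r j) : ℕ) : B) := Nat.cast_dvd_cast h3
      · rw [if_neg heq, mul_zero]
        exact dvd_zero _
    obtain ⟨u, hu⟩ := hkey
    rw [hu]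
    have hassoc : (p : MvPolynomial (Fin d) B) ^ c *
        ((p : MvPolynomial (Fin d) B) ^ (m - c - vpVec p r) * u)
        = (p : MvPolynomial (Fin d) B) ^ (c + (m - c - vpVec p r)) * u := by
      rw [← mul_assoc, ← pow_add]
    rw [hassoc]
    exact Dvd.dvd.mul_right (pow_dvd_pow _ (by omega)) u
  | zero => rw [mvHasseDeriv_zero']; exact dvd_zero _
  | add x y _ _ ihx ihy => rw [mvHasseDeriv_add]; exact dvd_add ihx ihy
  | smul a x _ ihx =>
    rw [mvHasseDeriv_smul, MvPolynomial.smul_eq_C_mul]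
    exact Dvd.dvd.mul_left ihx _

end Filtration

section GLemmas

variable {d : ℕ} {B : Type*} [CommRing B]

theorem Gpoly_mul (M₁ M₂ : Fin d → ℕ) :
    Gpoly B (fun j => M₁ j + M₂ j) = Gpoly B M₁ * Gpoly B M₂ := by
  unfold Gpoly
  rw [← Finset.prod_mul_distrib]
  apply Finset.prod_congr rfl
  intro j _
  rw [pow_add]

theorem Gpoly_pow (M : Fin d → ℕ) (q : ℕ) :
    (Gpoly B M) ^ q = Gpoly B (fun j => q * M j) := by
  unfold Gpoly
  rw [← Finset.prod_pow]
  apply Finset.prod_congr rfl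
  intro j _
  rw [← pow_mul, mul_comm (M j) q]

theorem Gpoly_congr {M₁ M₂ : Fin d → ℕ} (h : ∀ j, M₁ j = M₂ j) :
    Gpoly B M₁ = Gpoly B M₂ := by
  have : M₁ = M₂ := funext h
  rw [this]

theorem mvHasseDeriv_Gpoly (r : Fin d →₀ ℕ) (M : Fin d → ℕ) :
    mvHasseDeriv r (Gpoly B M)
      = ((∏ j, (M j).choose (r j) : ℕ) : MvPolynomial (Fin d) B) *
        Gpoly B (fun j => M j - r j) := by
  apply MvPolynomial.ext
  intro e
  rw [mvHasseDeriv_coeff, Gpoly_coeff]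
  have hcast : ((∏ j, (M j).choose (r j) : ℕ) : MvPolynomial (Fin d) B)
      = MvPolynomial.C ((∏ j, (M j).choose (r j) : ℕ) : B) := by
    rw [map_natCast]
  rw [hcast, MvPolynomial.coeff_C_mul, Gpoly_coeff]
  rw [← Nat.cast_mul, ← Nat.cast_mul, ← Finset.prod_mul_distrib, ← Finset.prod_mul_distrib]
  congr 2
  funext j
  have hadd : (e + r) j = e j + r j := Finsupp.add_apply e r j
  rw [hadd]
  exact choose_trinomial (M j) (e j) (r j)

theorem map_Gpoly {B' : Type*} [CommRing B'] (f : B →+* B') (M : Fin d → ℕ) :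
    MvPolynomial.map f (Gpoly B M) = Gpoly B' M := by
  unfold Gpoly
  rw [map_prod]
  apply Finset.prod_congr rfl
  intro j _
  rw [map_pow, map_add, map_one, MvPolynomial.map_X]

theorem Gpoly_ne_zero {K : Type*} [Field K] (M : Fin d → ℕ) :
    Gpoly K (d := d) M ≠ 0 := by
  unfold Gpoly
  apply Finset.prod_ne_zero_iff.mpr
  intro j _
  apply pow_ne_zero
  intro hcon
  have h1 : MvPolynomial.coeff 0 ((1 : MvPolynomial (Fin d) K) + MvPolynomial.X j) = 1 := by
    rw [MvPolynomial.coeff_add, MvPolynomial.coeff_zero_X, MvPolynomial.coeff_zero_one, add_zero]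
  rw [hcon] at h1
  simp at h1

end GLemmas

section Indep

theorem natCast_prod_congr {B : Type*} [CommRing B] {p : ℕ} [Fact p.Prime] [CharP B p] {d : ℕ}
    (f g : Fin d → ℕ) (h : ∀ j, f j ≡ g j [MOD p]) :
    ((∏ j, f j : ℕ) : B) = ((∏ j, g j : ℕ) : B) := by
  have hz : ((∏ j, f j : ℕ) : ZMod p) = ((∏ j, g j : ℕ) : ZMod p) := by
    push_cast
    apply Finset.prod_congr rfl
    intro j _
    exact (ZMod.natCast_eq_natCast_iff _ _ _).mpr (h j)
  calc ((∏ j, f j : ℕ) : B) = (ZMod.castHom (dvd_refl p) B) ((∏ j, f j : ℕ) : ZMod p) :=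
        (map_natCast _ _).symm
    _ = (ZMod.castHom (dvd_refl p) B) ((∏ j, g j : ℕ) : ZMod p) := by rw [hz]
    _ = ((∏ j, g j : ℕ) : B) := map_natCast _ _

theorem indep_binomial {B : Type*} [CommRing B] {p : ℕ} [hfp : Fact p.Prime] [CharP B p] {d : ℕ}
    {ι : Type*} [DecidableEq ι] (T : Finset ι) (s : ι → Fin d → ℕ)
    (hinj : ∀ i ∈ T, ∀ i' ∈ T, s i = s i' → i = i') (c : ι → B) (R₀ : ℕ)
    (H : ∀ N : Fin d → ℕ, (∀ j, R₀ ≤ N j) →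
      ∑ i ∈ T, ((∏ j, (N j).choose (s i j) : ℕ) : B) * c i = 0) :
    ∀ i ∈ T, c i = 0 := by
  have hp : p.Prime := hfp.out
  have main : ∀ t : ℕ, ∀ i ∈ T, (∑ j, s i j) = t → c i = 0 := by
    intro t
    induction t using Nat.strong_induction_on with
    | _ t ih =>
      intro i hi hweight
      set bound := ∑ i' ∈ T, ∑ j, s i' j with hbound
      have hlt : ∀ i' ∈ T, ∀ j, s i' j < p ^ bound := by
        intro i' hi' j
        have h1 : s i' j ≤ ∑ j, s i' j :=
          Finset.single_le_sum (fun _ _ => Nat.zero_le _) (Finset.mem_univ j)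
        have h2 : (∑ j, s i' j) ≤ bound :=
          Finset.single_le_sum (f := fun i' => ∑ j, s i' j) (fun _ _ => Nat.zero_le _) hi'
        have h3 : bound < p ^ bound := Nat.lt_pow_self hp.one_lt
        omega
      have hNge : ∀ j, R₀ ≤ s i j + p ^ bound * R₀ := by
        intro j
        have : R₀ ≤ p ^ bound * R₀ := Nat.le_mul_of_pos_left R₀ (pow_pos hp.pos bound)
        omega
      have heq := H (fun j => s i j + p ^ bound * R₀) hNge
      have hcoef : ∀ i' ∈ T,
          ((∏ j, (s i j + p ^ bound * R₀).choose (s i' j) : ℕ) : B)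
          = ((∏ j, (s i j).choose (s i' j) : ℕ) : B) := by
        intro i' hi'
        exact natCast_prod_congr (p := p) _ _
          (fun j => lucas_shift bound (s i j) (s i' j) R₀ (hlt i hi j) (hlt i' hi' j))
      rw [Finset.sum_congr rfl (fun i' hi' => by rw [hcoef i' hi'])] at heq
      rw [← Finset.add_sum_erase _ _ hi] at heq
      have hself : ((∏ j, (s i j).choose (s i j) : ℕ) : B) = 1 := by
        simp [Nat.choose_self]
      have hrest : ∀ i' ∈ T.erase i,
          ((∏ j, (s i j).choose (s i' j) : ℕ) : B) * c i' = 0 := by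
        intro i' hi'
        have hi'T := Finset.mem_of_mem_erase hi'
        have hne : i' ≠ i := Finset.ne_of_mem_erase hi'
        by_cases hle : ∀ j, s i' j ≤ s i j
        · have hsne : s i' ≠ s i := fun hcon => hne (hinj i' hi'T i hi hcon)
          have hex : ∃ j0, s i' j0 < s i j0 := by
            by_contra hc
            push_neg at hc
            apply hsne
            funext j
            have := hle j
            have := hc j
            omega
          obtain ⟨j0, hj0⟩ := hex
          have hwlt : (∑ j, s i' j) < t := by
            rw [← hweight]
            exact Finset.sum_lt_sum (fun j _ => hle j) ⟨j0, Finset.mem_univ j0, hj0⟩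
          rw [ih _ hwlt i' hi'T rfl, mul_zero]
        · push_neg at hle
          obtain ⟨j0, hj0⟩ := hle
          have hzero : (∏ j, (s i j).choose (s i' j) : ℕ) = 0 :=
            Finset.prod_eq_zero (Finset.mem_univ j0) (Nat.choose_eq_zero_of_lt hj0)
          rw [hzero]
          simp
      rw [Finset.sum_eq_zero hrest, add_zero, hself, one_mul] at heq
      exact heq
  intro i hi
  exact main _ i hi rfl

end Indep

/-- With `A = k[t₁,…,t_d]`, `A_{n+1} = W_{n+1}(k)[t₁,…,t_d]` (`k` a perfect
field of characteristic `p`) and the canonical injective ring homomorphism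
`w̃_n : W_{n+1}(A) → A_{n+1}`, a finite operator `∑_{𝐫∈S} a_𝐫 ∂^{[𝐫]}` annihilates the image
of `w̃_n` if and only if `a_𝟎 = 0` (in case `𝟎 ∈ S`) and `a_𝐫 ∈ p^{v_p(𝐫)+1} A_{n+1}` for
every nonzero `𝐫 ∈ S`. -/
theorem witt_diff_op_vanishing_iff (p : ℕ) [Fact p.Prime]
    (k : Type*) [Field k] [CharP k p] [PerfectRing k p]
    (d n : ℕ) (hd : 1 ≤ d)
    (res : TruncatedWittVector p (n + 1) k →+* k)
    (hres : ∀ c : TruncatedWittVector p (n + 1) k, res c = c.coeff 0)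
    (wt : TruncatedWittVector p (n + 1) (MvPolynomial (Fin d) k) →+*
      MvPolynomial (Fin d) (TruncatedWittVector p (n + 1) k))
    (hwtinj : Function.Injective wt)
    (hwt : ∀ (x : TruncatedWittVector p (n + 1) (MvPolynomial (Fin d) k))
        (g : Fin (n + 1) → MvPolynomial (Fin d) (TruncatedWittVector p (n + 1) k)),
      (∀ i, MvPolynomial.map res (g i) = x.coeff i) →
      wt x = ∑ i : Fin (n + 1),
        (p : MvPolynomial (Fin d) (TruncatedWittVector p (n + 1) k)) ^ (i : ℕ)
          * g i ^ p ^ (n - (i : ℕ)))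
    (S : Finset (Fin d →₀ ℕ))
    (a : (Fin d →₀ ℕ) → MvPolynomial (Fin d) (TruncatedWittVector p (n + 1) k)) :
    (∀ x : TruncatedWittVector p (n + 1) (MvPolynomial (Fin d) k),
        ∑ r ∈ S, a r * mvHasseDeriv r (wt x) = 0) ↔
      ((0 ∈ S → a 0 = 0) ∧
        ∀ r ∈ S, r ≠ 0 →
          ∃ u, a r = (p : MvPolynomial (Fin d) (TruncatedWittVector p (n + 1) k)) ^
            (vpVec p r + 1) * u) := by
    classical
  have hp : p.Prime := Fact.out
  -- abbreviations via haves
  have hpA : (p : MvPolynomial (Fin d) (TruncatedWittVector p (n + 1) k)) ^ (n + 1) = 0 := by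
    rw [natCast_pow_eq_C, trunc_p_pow_zero n, map_zero]
  have hAzero : ∀ (i : ℕ), i ≤ n + 1 →
      ∀ f : MvPolynomial (Fin d) (TruncatedWittVector p (n + 1) k),
      (p : MvPolynomial (Fin d) (TruncatedWittVector p (n + 1) k)) ^ i * f = 0 →
      ∃ g, f = (p : MvPolynomial (Fin d) (TruncatedWittVector p (n + 1) k)) ^ (n + 1 - i) * g := by
    intro i hi f hf
    have hcoeff : ∀ e, (p : TruncatedWittVector p (n + 1) k) ^ i * f.coeff e = 0 := by
      intro e
      have h := congrArg (MvPolynomial.coeff e) hf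
      rwa [natCast_pow_eq_C, MvPolynomial.coeff_C_mul, MvPolynomial.coeff_zero] at h
    have hdvd : MvPolynomial.C ((p : TruncatedWittVector p (n + 1) k) ^ (n + 1 - i)) ∣ f := by
      rw [MvPolynomial.C_dvd_iff_dvd_coeff]
      intro e
      obtain ⟨y, hy⟩ := trunc_cancel n hi (hcoeff e)
      exact ⟨y, hy⟩
    obtain ⟨g, hg⟩ := hdvd
    exact ⟨g, by rw [natCast_pow_eq_C]; exact hg⟩
  have hAker : ∀ f : MvPolynomial (Fin d) (TruncatedWittVector p (n + 1) k),
      MvPolynomial.map res f = 0 →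
      ∃ g, f = (p : MvPolynomial (Fin d) (TruncatedWittVector p (n + 1) k)) * g := by
    intro f hf
    have hdvd : MvPolynomial.C ((p : TruncatedWittVector p (n + 1) k)) ∣ f := by
      rw [MvPolynomial.C_dvd_iff_dvd_coeff]
      intro e
      have h1 : res (f.coeff e) = 0 := by
        have h := congrArg (MvPolynomial.coeff e) hf
        rwa [MvPolynomial.coeff_map, MvPolynomial.coeff_zero] at h
      have h2 : (f.coeff e).coeff 0 = 0 := by rw [← hres]; exact h1
      obtain ⟨y, hy⟩ := trunc_p_dvd_of_coeff_zero n h2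
      exact ⟨y, hy⟩
    obtain ⟨g, hg⟩ := hdvd
    refine ⟨g, ?_⟩
    rw [← map_natCast (MvPolynomial.C : TruncatedWittVector p (n + 1) k →+* _) p]
    exact hg
  have hπp : (p : MvPolynomial (Fin d) k) = 0 := CharP.cast_eq_zero _ p
  have hres_surj : Function.Surjective res := by
    intro x
    refine ⟨TruncatedWittVector.mk p (fun _ => x), ?_⟩
    rw [hres, TruncatedWittVector.coeff_mk]
  have hπ_surj : Function.Surjective
      (MvPolynomial.map (σ := Fin d) res) := MvPolynomial.map_surjective res hres_surj
  constructor
  · -- forward direction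
    intro hvan
    have hE : ∀ c : ℕ, c ≤ n → ∀ g : MvPolynomial (Fin d) (TruncatedWittVector p (n + 1) k),
        ∃ w, ∑ r ∈ S, a r * mvHasseDeriv r (g ^ p ^ c)
          = (p : MvPolynomial (Fin d) (TruncatedWittVector p (n + 1) k)) ^ (c + 1) * w := by
      intro c hc g
      set i : Fin (n + 1) := ⟨n - c, by omega⟩ with hidef
      set gf : Fin (n + 1) → MvPolynomial (Fin d) (TruncatedWittVector p (n + 1) k) :=
        fun j => if j = i then g else 0 with hgf
      have hcoeffs : ∀ j, MvPolynomial.map res (gf j)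
          = (TruncatedWittVector.mk p (fun j' => MvPolynomial.map res (gf j'))).coeff j := by
        intro j; rw [TruncatedWittVector.coeff_mk]
      have hx := hwt _ gf hcoeffs
      have hsimp : (∑ j : Fin (n + 1),
            (p : MvPolynomial (Fin d) (TruncatedWittVector p (n + 1) k)) ^ (j : ℕ)
              * gf j ^ p ^ (n - (j : ℕ)))
          = (p : MvPolynomial (Fin d) (TruncatedWittVector p (n + 1) k)) ^ (n - c)
              * g ^ p ^ c := by
        rw [Fintype.sum_eq_single i]
        · have h1 : gf i = g := by rw [hgf]; simp
          have h2 : (i : ℕ) = n - c := rfl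
          have h3 : n - (n - c) = c := by omega
          rw [h1, h2, h3]
        · intro j hj
          have h1 : gf j = 0 := by rw [hgf]; simp [hj]
          rw [h1, zero_pow (pow_ne_zero _ hp.ne_zero), mul_zero]
      have hv := hvan (TruncatedWittVector.mk p (fun j' => MvPolynomial.map res (gf j')))
      rw [hx, hsimp] at hv
      have hpull : ∑ r ∈ S, a r * mvHasseDeriv r
            ((p : MvPolynomial (Fin d) (TruncatedWittVector p (n + 1) k)) ^ (n - c) * g ^ p ^ c)
          = (p : MvPolynomial (Fin d) (TruncatedWittVector p (n + 1) k)) ^ (n - c)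
              * ∑ r ∈ S, a r * mvHasseDeriv r (g ^ p ^ c) := by
        rw [Finset.mul_sum]
        apply Finset.sum_congr rfl
        intro r _
        rw [natCast_pow_eq_C, mvHasseDeriv_C_mul, ← natCast_pow_eq_C]
        ring
      rw [hpull] at hv
      obtain ⟨w, hw⟩ := hAzero (n - c) (by omega) _ hv
      refine ⟨w, ?_⟩
      have h4 : n + 1 - (n - c) = c + 1 := by omega
      rwa [h4] at hw
    -- weight function
    set wf : (Fin d →₀ ℕ) → ℕ :=
      fun r => if r = 0 then n + 1 else min (vpVec p r + 1) (n + 1) with hwf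
    have hDiv : ∀ c : ℕ, c ≤ n + 1 → ∀ r ∈ S,
        (p : MvPolynomial (Fin d) (TruncatedWittVector p (n + 1) k)) ^ (min c (wf r)) ∣ a r := by
      intro c
      induction c with
      | zero => intro _ r _; simp
      | succ c ihc =>
        intro hc r₀ hr₀S
        have ihc' := ihc (by omega)
        by_cases hwf2 : wf r₀ ≤ c
        · have h1 := ihc' r₀ hr₀S
          have h2 : min (c + 1) (wf r₀) = min c (wf r₀) := by
            rw [min_eq_right (le_trans hwf2 (Nat.le_succ c)), min_eq_right hwf2]
          rw [h2]; exact h1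
        · push_neg at hwf2
          have hcn : c ≤ n := by omega
          have hm : min (c + 1) (wf r₀) = c + 1 := min_eq_left hwf2
          rw [hm]
          set T := S.filter (fun r => c + 1 ≤ wf r) with hT
          have hr₀T : r₀ ∈ T := Finset.mem_filter.mpr ⟨hr₀S, hwf2⟩
          have hrdvd : ∀ r ∈ T, ∀ j, p ^ c ∣ r j := by
            intro r hrT j
            rcases eq_or_ne (r j) 0 with h0 | h0
            · rw [h0]; exact dvd_zero _
            have hrne : r ≠ 0 := by
              intro hcon; subst hcon; simp at h0
            have hwfr := (Finset.mem_filter.mp hrT).2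
            have hv : c ≤ vpVec p r := by
              simp only [hwf, if_neg hrne] at hwfr
              have := (le_min_iff.mp hwfr).1
              omega
            have h1 : vpVec p r ≤ padicValNat p (r j) := vpVec_le h0
            calc p ^ c ∣ p ^ padicValNat p (r j) := pow_dvd_pow p (by omega)
              _ ∣ r j := pow_padicValNat_dvd
          have hbex : ∀ r, ∃ b, r ∈ T →
              a r = (p : MvPolynomial (Fin d) (TruncatedWittVector p (n + 1) k)) ^ c * b := by
            intro r
            by_cases hrT : r ∈ T
            · have h1 := ihc' r (Finset.mem_filter.mp hrT).1
              have h2 : min c (wf r) = c := by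
                have hcc := (Finset.mem_filter.mp hrT).2
                exact min_eq_left (by omega)
              rw [h2] at h1
              obtain ⟨u, hu⟩ := h1
              exact ⟨u, fun _ => hu⟩
            · exact ⟨0, fun h => absurd h hrT⟩
          choose b hb using hbex
          set R₀ := S.sup (fun r => Finset.univ.sup (fun j => r j)) with hR₀def
          have hR₀ : ∀ r ∈ S, ∀ j, r j ≤ R₀ := by
            intro r hrS j
            calc r j ≤ Finset.univ.sup (fun j' => r j') := Finset.le_sup (Finset.mem_univ j)
              _ ≤ R₀ := Finset.le_sup (f := fun r' => Finset.univ.sup fun j' => r' j') hrS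
          have hNrel : ∀ N : Fin d → ℕ, (∀ j, R₀ ≤ N j) →
              ∑ r ∈ T, ((∏ j, (N j).choose (r j / p ^ c) : ℕ) : MvPolynomial (Fin d) k) *
                (MvPolynomial.map res (b r) * Gpoly k (fun j => p ^ c * R₀ - r j)) = 0 := by
            intro N hN
            obtain ⟨w, hw⟩ := hE c hcn (Gpoly _ N)
            rw [Gpoly_pow] at hw
            rw [Finset.sum_congr rfl (fun r _ => by
              rw [mvHasseDeriv_Gpoly r (fun j => p ^ c * N j)])] at hw
            rw [← Finset.sum_filter_add_sum_filter_not S (fun r => c + 1 ≤ wf r)] at hw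
            have hlow : (p : MvPolynomial (Fin d) (TruncatedWittVector p (n + 1) k)) ^ (c + 1) ∣
                ∑ r ∈ S.filter (fun r => ¬ c + 1 ≤ wf r),
                  a r * (((∏ j, (p ^ c * N j).choose (r j) : ℕ) :
                      MvPolynomial (Fin d) (TruncatedWittVector p (n + 1) k)) *
                    Gpoly _ (fun j => p ^ c * N j - r j)) := by
              apply Finset.dvd_sum
              intro r hrT'
              obtain ⟨hrS, hwfr⟩ := Finset.mem_filter.mp hrT'
              push_neg at hwfr
              have hrne : r ≠ 0 := by
                intro hcon; subst hcon
                simp only [hwf, if_pos rfl] at hwfr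
                omega
              have hvle : vpVec p r + 1 ≤ c := by
                simp only [hwf, if_neg hrne] at hwfr
                rcases min_lt_iff.mp hwfr with h | h
                · omega
                · omega
              have hdvda : (p : MvPolynomial (Fin d) (TruncatedWittVector p (n + 1) k))
                  ^ (vpVec p r + 1) ∣ a r := by
                have h1 := ihc' r hrS
                have h2 : min c (wf r) = vpVec p r + 1 := by
                  simp only [hwf, if_neg hrne]
                  have hmin1 : min (vpVec p r + 1) (n + 1) = vpVec p r + 1 :=
                    min_eq_left (by omega)
                  rw [hmin1, min_eq_right (by omega : vpVec p r + 1 ≤ c)]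
                rwa [h2] at h1
              have hdvdC : (p : MvPolynomial (Fin d) (TruncatedWittVector p (n + 1) k))
                  ^ (c - vpVec p r) ∣
                  ((∏ j, (p ^ c * N j).choose (r j) : ℕ) :
                    MvPolynomial (Fin d) (TruncatedWittVector p (n + 1) k)) := by
                obtain ⟨j₀, hj₀ne, hj₀v⟩ := vpVec_spec (p := p) hrne
                have h1 : p ^ (c - padicValNat p (r j₀)) ∣ (p ^ c * N j₀).choose (r j₀) :=
                  pow_sub_padic_dvd_choose hp (dvd_mul_right _ _) hj₀ne
                have h2 : (p ^ c * N j₀).choose (r j₀) ∣ ∏ j, (p ^ c * N j).choose (r j) :=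
                  Finset.dvd_prod_of_mem _ (Finset.mem_univ j₀)
                have h3 : p ^ (c - vpVec p r) ∣ ∏ j, (p ^ c * N j).choose (r j) := by
                  rw [← hj₀v]; exact dvd_trans h1 h2
                calc (p : MvPolynomial (Fin d) (TruncatedWittVector p (n + 1) k))
                    ^ (c - vpVec p r)
                    = ((p ^ (c - vpVec p r) : ℕ) :
                        MvPolynomial (Fin d) (TruncatedWittVector p (n + 1) k)) := by
                      push_cast; ring
                  _ ∣ _ := Nat.cast_dvd_cast h3
              obtain ⟨u1, hu1⟩ := hdvda
              obtain ⟨u2, hu2⟩ := hdvdC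
              rw [hu1, hu2]
              have hcalc : (p : MvPolynomial (Fin d) (TruncatedWittVector p (n + 1) k))
                    ^ (vpVec p r + 1) * u1 *
                    ((p : MvPolynomial (Fin d) (TruncatedWittVector p (n + 1) k))
                      ^ (c - vpVec p r) * u2 * Gpoly _ (fun j => p ^ c * N j - r j))
                  = (p : MvPolynomial (Fin d) (TruncatedWittVector p (n + 1) k))
                    ^ ((vpVec p r + 1) + (c - vpVec p r)) *
                      (u1 * u2 * Gpoly _ (fun j => p ^ c * N j - r j)) := by
                rw [pow_add]; ring
              rw [hcalc]
              have hexp : (vpVec p r + 1) + (c - vpVec p r) = c + 1 := by omega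
              rw [hexp]
              exact dvd_mul_right _ _
            obtain ⟨L, hL⟩ := hlow
            have hHigh : ∑ r ∈ T, a r *
                  (((∏ j, (p ^ c * N j).choose (r j) : ℕ) :
                      MvPolynomial (Fin d) (TruncatedWittVector p (n + 1) k)) *
                    Gpoly _ (fun j => p ^ c * N j - r j))
                = (p : MvPolynomial (Fin d) (TruncatedWittVector p (n + 1) k)) ^ (c + 1)
                  * (w - L) := by
              rw [hT]
              rw [mul_sub]
              rw [← hL]
              linear_combination hw
            have hsub : ∑ r ∈ T, a r *
                  (((∏ j, (p ^ c * N j).choose (r j) : ℕ) :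
                      MvPolynomial (Fin d) (TruncatedWittVector p (n + 1) k)) *
                    Gpoly _ (fun j => p ^ c * N j - r j))
                = (p : MvPolynomial (Fin d) (TruncatedWittVector p (n + 1) k)) ^ c *
                  ∑ r ∈ T, b r *
                  (((∏ j, (p ^ c * N j).choose (r j) : ℕ) :
                      MvPolynomial (Fin d) (TruncatedWittVector p (n + 1) k)) *
                    Gpoly _ (fun j => p ^ c * N j - r j)) := by
              rw [Finset.mul_sum]
              apply Finset.sum_congr rfl
              intro r hrT
              rw [hb r hrT]; ring
            rw [hsub] at hHigh
            have hzero : (p : MvPolynomial (Fin d) (TruncatedWittVector p (n + 1) k)) ^ c *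
                ((∑ r ∈ T, b r *
                  (((∏ j, (p ^ c * N j).choose (r j) : ℕ) :
                      MvPolynomial (Fin d) (TruncatedWittVector p (n + 1) k)) *
                    Gpoly _ (fun j => p ^ c * N j - r j))) -
                  (p : MvPolynomial (Fin d) (TruncatedWittVector p (n + 1) k)) * (w - L)) = 0 := by
              rw [mul_sub, hHigh, pow_succ]
              ring
            obtain ⟨y, hy⟩ := hAzero c (by omega) _ hzero
            have hXp : ∑ r ∈ T, b r *
                  (((∏ j, (p ^ c * N j).choose (r j) : ℕ) :
                      MvPolynomial (Fin d) (TruncatedWittVector p (n + 1) k)) *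
                    Gpoly _ (fun j => p ^ c * N j - r j))
                = (p : MvPolynomial (Fin d) (TruncatedWittVector p (n + 1) k)) *
                  ((w - L) + (p : MvPolynomial (Fin d) (TruncatedWittVector p (n + 1) k))
                    ^ (n - c) * y) := by
              have h2 : n + 1 - c = (n - c) + 1 := by omega
              rw [h2] at hy
              rw [pow_succ] at hy
              linear_combination hy
            have hmap := congrArg (MvPolynomial.map res) hXp
            rw [map_mul, map_natCast, hπp, zero_mul, map_sum] at hmap
            have hterm2 : ∀ r ∈ T, MvPolynomial.map res (b r *
                  (((∏ j, (p ^ c * N j).choose (r j) : ℕ) :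
                      MvPolynomial (Fin d) (TruncatedWittVector p (n + 1) k)) *
                    Gpoly _ (fun j => p ^ c * N j - r j)))
                = Gpoly k (fun j => p ^ c * (N j - R₀)) *
                  (((∏ j, (N j).choose (r j / p ^ c) : ℕ) : MvPolynomial (Fin d) k) *
                    (MvPolynomial.map res (b r) * Gpoly k (fun j => p ^ c * R₀ - r j))) := by
              intro r hrT
              rw [map_mul, map_mul, map_natCast, map_Gpoly]
              have hC : ((∏ j, (p ^ c * N j).choose (r j) : ℕ) : MvPolynomial (Fin d) k)
                  = ((∏ j, (N j).choose (r j / p ^ c) : ℕ) : MvPolynomial (Fin d) k) := by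
                apply natCast_prod_congr (p := p)
                intro j
                have hdj := hrdvd r hrT j
                have hrj : p ^ c * (r j / p ^ c) = r j := Nat.mul_div_cancel' hdj
                calc (p ^ c * N j).choose (r j)
                    = (p ^ c * N j).choose (p ^ c * (r j / p ^ c)) := by rw [hrj]
                  _ ≡ (N j).choose (r j / p ^ c) [MOD p] := lucas_scale c (N j) (r j / p ^ c)
              have hGsplit : Gpoly k (fun j => p ^ c * N j - r j)
                  = Gpoly k (fun j => p ^ c * (N j - R₀)) *
                    Gpoly k (fun j => p ^ c * R₀ - r j) := by
                rw [← Gpoly_mul]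
                apply Gpoly_congr
                intro j
                have h1 : r j ≤ R₀ := hR₀ r (Finset.mem_filter.mp hrT).1 j
                have h2 : R₀ ≤ N j := hN j
                have h3 : R₀ ≤ p ^ c * R₀ := Nat.le_mul_of_pos_left R₀ (pow_pos hp.pos c)
                obtain ⟨D, hD⟩ : ∃ D, N j = R₀ + D := ⟨N j - R₀, by omega⟩
                rw [hD]
                have h4 : R₀ + D - R₀ = D := by omega
                rw [h4, Nat.mul_add]
                omega
              rw [hC, hGsplit]
              ring
            rw [Finset.sum_congr rfl hterm2, ← Finset.mul_sum] at hmap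
            rcases mul_eq_zero.mp hmap with hG0 | hsum0
            · exact absurd hG0 (Gpoly_ne_zero _)
            · exact hsum0
          have hinj : ∀ r ∈ T, ∀ r' ∈ T,
              (fun j => r j / p ^ c) = (fun j => r' j / p ^ c) → r = r' := by
            intro r hrT r' hr'T hss
            ext j
            have h1 := Nat.mul_div_cancel' (hrdvd r hrT j)
            have h2 := Nat.mul_div_cancel' (hrdvd r' hr'T j)
            have h3 : r j / p ^ c = r' j / p ^ c := congrFun hss j
            rw [← h1, h3, h2]
          have hkey := indep_binomial (p := p) T (fun r j => r j / p ^ c) hinj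
            (fun r => MvPolynomial.map res (b r) * Gpoly k (fun j => p ^ c * R₀ - r j))
            R₀ hNrel r₀ hr₀T
          have hb0 : MvPolynomial.map res (b r₀) = 0 := by
            rcases mul_eq_zero.mp hkey with h | h
            · exact h
            · exact absurd h (Gpoly_ne_zero _)
          obtain ⟨y, hy⟩ := hAker (b r₀) hb0
          refine ⟨y, ?_⟩
          rw [hb r₀ hr₀T, hy, pow_succ]
          ring
    -- endgame
    have hfinal := hDiv (n + 1) le_rfl
    constructor
    · intro h0S
      have h := hfinal 0 h0S
      have hwf0 : wf 0 = n + 1 := by simp only [hwf, if_pos rfl]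
      rw [hwf0, min_self] at h
      obtain ⟨u, hu⟩ := h
      rw [hu, hpA, zero_mul]
    · intro r hrS hrne
      have h := hfinal r hrS
      have hwfr : wf r = min (vpVec p r + 1) (n + 1) := by
        simp only [hwf, if_neg hrne]
      rw [hwfr] at h
      rcases le_or_gt (vpVec p r + 1) (n + 1) with hle | hgt
      · have hmin : min (n + 1) (min (vpVec p r + 1) (n + 1)) = vpVec p r + 1 := by
          rw [min_eq_left hle, min_eq_right hle]
        rw [hmin] at h
        exact h
      · have hmin : min (n + 1) (min (vpVec p r + 1) (n + 1)) = n + 1 := by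
          rw [min_eq_right (by omega : n + 1 ≤ vpVec p r + 1), min_self]
        rw [hmin] at h
        obtain ⟨u, hu⟩ := h
        refine ⟨0, ?_⟩
        rw [mul_zero, hu, hpA, zero_mul]
  · -- backward direction
    rintro ⟨h0, hdvd⟩ x
    obtain ⟨g, hg⟩ : ∃ g : Fin (n + 1) → MvPolynomial (Fin d) (TruncatedWittVector p (n + 1) k),
        ∀ i, MvPolynomial.map res (g i) = x.coeff i := by
      have := fun i => hπ_surj (x.coeff i)
      choose g hg using this
      exact ⟨g, hg⟩
    rw [hwt x g hg]
    apply Finset.sum_eq_zero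
    intro r hrS
    by_cases hr0 : r = 0
    · subst hr0
      rw [h0 hrS, zero_mul]
    · obtain ⟨u, hu⟩ := hdvd r hrS hr0
      rw [mvHasseDeriv_sum, Finset.mul_sum]
      apply Finset.sum_eq_zero
      intro i _
      have hpull : mvHasseDeriv r
            ((p : MvPolynomial (Fin d) (TruncatedWittVector p (n + 1) k)) ^ (i : ℕ)
              * g i ^ p ^ (n - (i : ℕ)))
          = (p : MvPolynomial (Fin d) (TruncatedWittVector p (n + 1) k)) ^ (i : ℕ)
              * mvHasseDeriv r (g i ^ p ^ (n - (i : ℕ))) := by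
        rw [natCast_pow_eq_C, mvHasseDeriv_C_mul, ← natCast_pow_eq_C]
      have hmem := pow_p_pow_mem (B := TruncatedWittVector p (n + 1) k) hp (g i) (n - (i : ℕ))
      obtain ⟨Dq, hDq⟩ := hasse_dvd_of_mem_Msub hp hmem hr0
      rw [hpull, hu, hDq]
      have hcalc : (p : MvPolynomial (Fin d) (TruncatedWittVector p (n + 1) k))
            ^ (vpVec p r + 1) * u *
            ((p : MvPolynomial (Fin d) (TruncatedWittVector p (n + 1) k)) ^ (i : ℕ) *
              ((p : MvPolynomial (Fin d) (TruncatedWittVector p (n + 1) k))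
                ^ ((n - (i : ℕ)) - vpVec p r) * Dq))
          = (p : MvPolynomial (Fin d) (TruncatedWittVector p (n + 1) k))
            ^ ((vpVec p r + 1) + (i : ℕ) + ((n - (i : ℕ)) - vpVec p r)) * (u * Dq) := by
        rw [pow_add, pow_add]; ring
      rw [hcalc]
      have hilt : (i : ℕ) ≤ n := by omega
      obtain ⟨ex, hex⟩ : ∃ ex,
          (vpVec p r + 1) + (i : ℕ) + ((n - (i : ℕ)) - vpVec p r) = (n + 1) + ex := by
        rcases le_or_gt (vpVec p r) (n - (i : ℕ)) with hle | hgt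
        · exact ⟨0, by omega⟩
        · exact ⟨vpVec p r + (i : ℕ) - n, by omega⟩
      rw [hex, pow_add, hpA, zero_mul, zero_mul]
end

section
/- Let p be a prime, n ≥ 1, and B a commutative ring such that pⁿ·B = 0, B/pB is reduced, and for every 0 ≤ i ≤ n and every x ∈ B, pⁱ·x = 0 implies x ∈ p^{n−i}·B. If F : B → B is a ring homomorphism satisfying F(x) ≡ x^p (mod pB) for all x ∈ B, then F is injective. -/
/-- Let `p` be prime, `n ≥ 1`, and `B` a commutative ring with `pⁿ·B = 0`,
such that `B/pB` is reduced and for every `0 ≤ i ≤ n`, `pⁱ·x = 0` implies `x ∈ p^{n-i}·B`.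
Then any ring endomorphism `F` of `B` with `F x ≡ x^p (mod pB)` for all `x` is injective. -/
theorem frobenius_lift_injective (p : ℕ) [Fact p.Prime] (n : ℕ) (hn : 1 ≤ n)
    (B : Type*) [CommRing B]
    (hpn : ∀ x : B, (p : B) ^ n * x = 0)
    (hred : IsReduced (B ⧸ Ideal.span {(p : B)}))
    (htors : ∀ i ≤ n, ∀ x : B, (p : B) ^ i * x = 0 → ∃ y : B, x = (p : B) ^ (n - i) * y)
    (F : B →+* B) (hF : ∀ x : B, F x - x ^ p ∈ Ideal.span {(p : B)}) :
    Function.Injective F := by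
  have key : ∀ j, j ≤ n → ∀ x : B, F x = 0 → ∃ y : B, x = (p : B) ^ j * y := by
    intro j
    induction j with
    | zero => exact fun _ x _ => ⟨x, by simp⟩
    | succ j ih =>
      intro hj x hx
      obtain ⟨y, hy⟩ := ih (le_of_lt (Nat.lt_of_succ_le hj)) x hx
      have hFy : (p : B) ^ j * F y = 0 := by
        have : F x = (p : B) ^ j * F y := by
          rw [hy]; simp [mul_comm]
        rw [← this, hx]
      obtain ⟨z, hz⟩ := htors j (le_of_lt (Nat.lt_of_succ_le hj)) (F y) hFy
      have hpz : F y ∈ Ideal.span {(p : B)} := by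
        rw [hz, Ideal.mem_span_singleton]
        exact Dvd.dvd.mul_right (dvd_pow_self _ (Nat.sub_ne_zero_of_lt (Nat.lt_of_succ_le hj))) z
      have hyp : y ^ p ∈ Ideal.span {(p : B)} := by
        have := hF y
        have : y ^ p = F y - (F y - y ^ p) := by ring
        rw [this]
        exact Ideal.sub_mem _ hpz (hF y)
      have hy0 : (Ideal.Quotient.mk (Ideal.span {(p : B)}) y) = 0 := by
        have hnil : IsNilpotent (Ideal.Quotient.mk (Ideal.span {(p : B)}) y) := by
          refine ⟨p, ?_⟩
          rw [← map_pow, Ideal.Quotient.eq_zero_iff_mem]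
          exact hyp
        exact hnil.eq_zero
      rw [Ideal.Quotient.eq_zero_iff_mem, Ideal.mem_span_singleton] at hy0
      obtain ⟨c, hc⟩ := hy0
      exact ⟨c, by rw [hy, hc, pow_succ]; ring⟩
  rw [injective_iff_map_eq_zero]
  intro x hx
  obtain ⟨y, hy⟩ := key n le_rfl x hx
  rw [hy]
  exact hpn y
end

section
/- Let p be a prime, k a field of characteristic p, A a commutative k-algebra, and n ≥ 1. Regard the truncated Witt vectors W_n(A) as a W_n(k)-module via functoriality, and write [·] for the Teichmüller lift and V for the Verschiebung. Then for any two distinct elements a, b ∈ A and any i ∈ ℕ, the element [a+b]^i of W_n(A) lies in the W_n(k)-submodule generated by the elements V^l([a]^{m₁}·[b]^{m₂}) with 0 ≤ l ≤ n−1 and m₁ + m₂ = p^l·i. -/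
/-- The functorial ring homomorphism `W_n(R) →+* W_n(S)` induced by a ring homomorphism
`f : R →+* S`; it acts coefficientwise. -/
noncomputable def twMap (p : ℕ) [Fact p.Prime] {R S : Type*} [CommRing R] [CommRing S]
    (n : ℕ) (f : R →+* S) :
    TruncatedWittVector p n R →+* TruncatedWittVector p n S :=
  (WittVector.truncate n).liftOfRightInverse TruncatedWittVector.out
    TruncatedWittVector.truncateFun_out
    ⟨(WittVector.truncate n).comp (WittVector.map f), fun x hx => by
      rw [WittVector.mem_ker_truncate] at hx
      rw [RingHom.mem_ker, RingHom.comp_apply, ← RingHom.mem_ker,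
        WittVector.mem_ker_truncate]
      intro i hi
      rw [WittVector.map_coeff, hx i hi, map_zero]⟩

/-- If `A` is a `k`-algebra then `W_n(A)` is a `W_n(k)`-algebra, by functoriality applied to
the structure map `k → A`. -/
noncomputable instance twAlgebra (p : ℕ) [Fact p.Prime] (n : ℕ) (k A : Type*) [CommRing k]
    [CommRing A] [Algebra k A] :
    Algebra (TruncatedWittVector p n k) (TruncatedWittVector p n A) :=
  (twMap p n (algebraMap k A)).toAlgebra

/-- The Teichmüller lift `[a] ∈ W_n(A)` of an element `a ∈ A`. -/
noncomputable def tTeich (p : ℕ) [Fact p.Prime] {A : Type*} [CommRing A] (n : ℕ) (a : A) :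
    TruncatedWittVector p n A :=
  WittVector.truncate n (WittVector.teichmuller p a)

/-- The Verschiebung `V : W_n(A) → W_n(A)`, obtained from the Verschiebung of the
untruncated Witt vectors. -/
noncomputable def tVer (p : ℕ) [Fact p.Prime] {A : Type*} [CommRing A] (n : ℕ)
    (x : TruncatedWittVector p n A) : TruncatedWittVector p n A :=
  WittVector.truncate n (WittVector.verschiebung x.out)

namespace Statement11

open WittVector MvPolynomial

universe u

variable {p : ℕ} [hp : Fact p.Prime]

section Frob

lemma wmap_frobenius {R S : Type u} [CommRing R] [CommRing S] (g : R →+* S) (x : WittVector p R) :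
    WittVector.map g (frobenius x) = frobenius (WittVector.map g x) :=
  IsPoly.map (frobenius_isPoly p) g x

private lemma frob_teich_aux₁ {S : Type u} (x : MvPolynomial S ℚ) :
    frobenius (teichmuller p x) = teichmuller p (x ^ p) := by
  apply (ghostMap.bijective_of_invertible p (MvPolynomial S ℚ)).1
  ext1 n
  simp only [ghostMap_apply, ghostComponent_frobenius, ghostComponent_teichmuller, ← pow_mul,
    pow_succ, mul_comm]

private lemma frob_teich_aux₂ {S : Type u} (x : MvPolynomial S ℤ) :
    frobenius (teichmuller p x) = teichmuller p (x ^ p) := by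
  refine map_injective (MvPolynomial.map (Int.castRingHom ℚ))
    (MvPolynomial.map_injective _ Int.cast_injective) ?_
  rw [map_teichmuller, wmap_frobenius, map_teichmuller, frob_teich_aux₁, RingHom.map_pow]

lemma frobenius_teichmuller {R : Type u} [CommRing R] (r : R) :
    frobenius (teichmuller p r) = teichmuller p (r ^ p) := by
  rcases MvPolynomial.counit_surjective R r with ⟨x, rfl⟩
  rw [← map_teichmuller, ← wmap_frobenius, frob_teich_aux₂, map_teichmuller, RingHom.map_pow]

end Frob

section Trunc

variable {R S : Type*} [CommRing R] [CommRing S]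

lemma wver_injective : Function.Injective (verschiebung : WittVector p R → WittVector p R) := by
  intro x y h
  ext m
  have := congrArg (fun w : WittVector p R => w.coeff (m + 1)) h
  simpa only [verschiebung_coeff_succ] using this

lemma exists_ver {x : WittVector p R} (h : x.coeff 0 = 0) :
    ∃ z : WittVector p R, verschiebung z = x := by
  refine ⟨WittVector.mk p fun m => x.coeff (m + 1), ?_⟩
  ext m
  cases m with
  | zero => rw [verschiebung_coeff_zero, h]
  | succ m => rw [verschiebung_coeff_succ]; rfl

lemma truncate_ver_congr {m n : ℕ} (hmn : m ≤ n + 1) {x y : WittVector p R}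
    (h : WittVector.truncate n x = WittVector.truncate n y) :
    WittVector.truncate m (verschiebung x) = WittVector.truncate m (verschiebung y) := by
  apply TruncatedWittVector.ext
  intro i
  rw [WittVector.coeff_truncate, WittVector.coeff_truncate]
  rcases i with ⟨iv, hi⟩
  cases iv with
  | zero => rw [verschiebung_coeff_zero, verschiebung_coeff_zero]
  | succ l =>
      have hl : l < n := by omega
      have := congrArg (fun u : TruncatedWittVector p n R => u.coeff ⟨l, hl⟩) h
      simp only [WittVector.coeff_truncate] at this
      simpa only [verschiebung_coeff_succ] using this

lemma truncate_out' {n : ℕ} (u : TruncatedWittVector p n R) :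
    WittVector.truncate n u.out = u :=
  TruncatedWittVector.truncateFun_out u

lemma tVer_truncate (n : ℕ) (z : WittVector p R) :
    tVer p n (WittVector.truncate n z) = WittVector.truncate n (verschiebung z) :=
  truncate_ver_congr (Nat.le_succ n) (by rw [truncate_out'])

lemma tVer_iterate (n l : ℕ) (z : WittVector p R) :
    (tVer p n)^[l] (WittVector.truncate n z) = WittVector.truncate n (verschiebung^[l] z) := by
  induction l with
  | zero => rfl
  | succ l ih =>
      rw [Function.iterate_succ_apply', Function.iterate_succ_apply', ih, tVer_truncate]

lemma twMap_truncate (n : ℕ) (f : R →+* S) (x : WittVector p R) :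
    twMap p n f (WittVector.truncate n x) = WittVector.truncate n (WittVector.map f x) :=
  RingHom.liftOfRightInverse_comp_apply (WittVector.truncate n) TruncatedWittVector.out
    TruncatedWittVector.truncateFun_out _ x

lemma wmap_iterate_ver (f : R →+* S) (l : ℕ) (x : WittVector p R) :
    WittVector.map f (verschiebung^[l] x) = verschiebung^[l] (WittVector.map f x) := by
  induction l with
  | zero => rfl
  | succ l ih => rw [Function.iterate_succ_apply', Function.iterate_succ_apply',
      map_verschiebung, ih]

end Trunc

section Generic

/-- The generic polynomial ring `ℤ[X₀, X₁]`. -/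
abbrev R2 : Type := MvPolynomial (Fin 2) ℤ

/-- The scaling substitution `X_i ↦ X_i · t`, used to detect homogeneity. -/
noncomputable def tau : R2 →+* Polynomial R2 :=
  (MvPolynomial.aeval (fun i : Fin 2 => Polynomial.C (MvPolynomial.X i) * Polynomial.X)).toRingHom

/-- The constant embedding `ℤ[X₀,X₁] → (ℤ[X₀,X₁])[t]`. -/
noncomputable def cp : R2 →+* Polynomial R2 := Polynomial.C

lemma monomial_eq_smul (m : Fin 2 →₀ ℕ) (c : ℤ) :
    (monomial m c : R2) = c • (X 0 ^ m 0 * X 1 ^ m 1) := by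
  rw [monomial_eq, Finsupp.prod_fintype _ _ (fun i => pow_zero _), Fin.prod_univ_two,
    smul_eq_C_mul]

lemma tau_X (i : Fin 2) : tau (X i) = Polynomial.C (X i) * Polynomial.X := by
  simp [tau]

lemma tau_monomial (m : Fin 2 →₀ ℕ) (c : ℤ) :
    tau (monomial m c) = Polynomial.C (monomial m c) * Polynomial.X ^ (m 0 + m 1) := by
  rw [monomial_eq_smul]
  rw [map_zsmul, map_mul, map_pow, map_pow, tau_X, tau_X, map_zsmul]
  rw [smul_mul_assoc]
  congr 1
  rw [mul_pow, mul_pow, ← map_pow, ← map_pow, pow_add, map_mul]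
  ring

lemma tau_as_sum (f : R2) :
    tau f = ∑ m ∈ f.support, Polynomial.C (monomial m (coeff m f)) *
      Polynomial.X ^ (m 0 + m 1) := by
  conv_lhs => rw [as_sum f, map_sum]
  exact Finset.sum_congr rfl fun m' _ => tau_monomial m' _

lemma homog (f : R2) (j : ℕ) (h : tau f = Polynomial.C f * Polynomial.X ^ j) :
    ∀ m ∈ f.support, m 0 + m 1 = j := by
  intro m hm
  by_contra hne
  rw [tau_as_sum] at h
  have h2 := congrArg (fun q : Polynomial R2 => MvPolynomial.coeff m (q.coeff (m 0 + m 1))) h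
  simp only [Polynomial.finset_sum_coeff, Polynomial.coeff_C_mul, Polynomial.coeff_X_pow,
    mul_ite, mul_one, mul_zero, MvPolynomial.coeff_sum, apply_ite (MvPolynomial.coeff m),
    MvPolynomial.coeff_monomial, MvPolynomial.coeff_zero] at h2
  rw [Finset.sum_eq_single m] at h2
  · simp only [if_pos rfl] at h2
    rw [if_neg (fun hh : m 0 + m 1 = j => hne hh)] at h2
    exact MvPolynomial.mem_support_iff.mp hm h2
  · intro m' _ hmm
    simp [if_neg hmm]
  · intro hms
    exact absurd hm hms

lemma teich_mul {R : Type u} [CommRing R] (r s : R) :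
    teichmuller p (r * s) = teichmuller p r * teichmuller p s :=
  MonoidHom.map_mul (teichmuller p) r s

lemma teich_pow {R : Type u} [CommRing R] (r : R) (k : ℕ) :
    teichmuller p (r ^ k) = teichmuller p r ^ k :=
  MonoidHom.map_pow (teichmuller p) r k

lemma term_equiv (m₁ m₂ : ℕ) :
    WittVector.map tau (teichmuller p (X 0) ^ m₁ * teichmuller p (X 1) ^ m₂) =
      teichmuller p (Polynomial.X : Polynomial R2) ^ (m₁ + m₂) *
        WittVector.map cp (teichmuller p (X 0) ^ m₁ * teichmuller p (X 1) ^ m₂) := by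
  rw [map_mul, map_mul, map_pow, map_pow, map_pow, map_pow, map_teichmuller, map_teichmuller,
    map_teichmuller, map_teichmuller, tau_X, tau_X, teich_mul, teich_mul, pow_add]
  simp only [cp]
  ring

/-- The generating set at truncation level `n` and weight `j`, in the generic ring. -/
def genSet (n j : ℕ) : Set (TruncatedWittVector p n R2) :=
  {u | ∃ l < n, ∃ m₁ m₂ : ℕ, m₁ + m₂ = p ^ l * j ∧
    u = WittVector.truncate n
      (verschiebung^[l] (teichmuller p (X 0) ^ m₁ * teichmuller p (X 1) ^ m₂))}

lemma main_induction (n : ℕ) : ∀ (j : ℕ) (x : WittVector p R2),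
    WittVector.map tau x = teichmuller p Polynomial.X ^ j * WittVector.map cp x →
    WittVector.truncate n x ∈ AddSubgroup.closure (genSet (p := p) n j) := by
  induction n with
  | zero =>
      intro j x _
      haveI : Subsingleton (TruncatedWittVector p 0 R2) :=
        ⟨fun a b => TruncatedWittVector.ext fun i => i.elim0⟩
      have : WittVector.truncate 0 x = 0 := Subsingleton.elim _ _
      rw [this]
      exact AddSubgroup.zero_mem _
  | succ n ih =>
      intro j x hx
      set f : R2 := x.coeff 0 with hf
      -- homogeneity of the zeroth coefficient
      have hτf : tau f = Polynomial.C f * Polynomial.X ^ j := by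
        have h0 := congrArg WittVector.constantCoeff hx
        simp only [map_mul, map_pow, WittVector.constantCoeff_apply, WittVector.map_coeff,
          teichmuller_coeff_zero] at h0
        rw [← hf] at h0
        rw [h0, mul_comm]
        rfl
      have hsupp := homog f j hτf
      -- the zeroth-layer approximation y
      set y : WittVector p R2 := ∑ m ∈ f.support,
        coeff m f • (teichmuller p (X 0) ^ m 0 * teichmuller p (X 1) ^ m 1) with hy
      have hy0 : y.coeff 0 = f := by
        have : WittVector.constantCoeff y = f := by
          rw [hy, map_sum]
          conv_rhs => rw [as_sum f]
          refine Finset.sum_congr rfl fun m _ => ?_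
          rw [map_zsmul, map_mul, map_pow, map_pow, WittVector.constantCoeff_apply,
            WittVector.constantCoeff_apply, teichmuller_coeff_zero, teichmuller_coeff_zero,
            monomial_eq_smul]
        exact this
      have hyE : WittVector.map tau y =
          teichmuller p Polynomial.X ^ j * WittVector.map cp y := by
        rw [hy, map_sum, map_sum, Finset.mul_sum]
        refine Finset.sum_congr rfl fun m hm => ?_
        rw [map_zsmul, map_zsmul, term_equiv, hsupp m hm, mul_smul_comm]
      have hymem : WittVector.truncate (n + 1) y ∈
          AddSubgroup.closure (genSet (p := p) (n + 1) j) := by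
        rw [hy, map_sum]
        refine AddSubgroup.sum_mem _ fun m hm => ?_
        rw [map_zsmul]
        refine AddSubgroup.zsmul_mem _ (AddSubgroup.subset_closure ?_) _
        exact ⟨0, Nat.succ_pos n, m 0, m 1, by rw [pow_zero, one_mul]; exact hsupp m hm, by
          rw [Function.iterate_zero_apply]⟩
      -- the error term is a Verschiebung
      have h0 : (x - y).coeff 0 = 0 := by
        have : WittVector.constantCoeff (x - y) = 0 := by
          rw [map_sub]
          show x.coeff 0 - y.coeff 0 = 0
          rw [hy0, ← hf, sub_self]
        exact this
      obtain ⟨z, hz⟩ := exists_ver h0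
      have hzE : WittVector.map tau z =
          teichmuller p Polynomial.X ^ (p * j) * WittVector.map cp z := by
        apply wver_injective
        rw [← map_verschiebung, hz, map_sub, hx, hyE, ← mul_sub, ← map_sub, ← hz,
          map_verschiebung, mul_comm, ← verschiebung_mul_frobenius, RingHom.map_pow,
          frobenius_teichmuller, teich_pow, ← pow_mul]
        exact congrArg _ (mul_comm _ _)
      have ihz := ih (p * j) z hzE
      -- transport along the additive map  u ↦ truncate (n+1) (V u.out)
      set Φ : TruncatedWittVector p n R2 →+ TruncatedWittVector p (n + 1) R2 :=
        AddMonoidHom.mk' (fun u => WittVector.truncate (n + 1) (verschiebung u.out))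
          (fun u v => by
            show WittVector.truncate (n + 1) (verschiebung (u + v).out) =
              WittVector.truncate (n + 1) (verschiebung u.out) +
                WittVector.truncate (n + 1) (verschiebung v.out)
            have h1 : WittVector.truncate n (u + v).out =
                WittVector.truncate n (u.out + v.out) := by
              rw [map_add, truncate_out', truncate_out', truncate_out']
            rw [truncate_ver_congr (le_refl (n + 1)) h1, map_add, map_add]) with hΦ
      have hΦz : Φ (WittVector.truncate n z) = WittVector.truncate (n + 1) (verschiebung z) := by
        rw [hΦ]
        exact truncate_ver_congr (le_refl (n + 1)) (truncate_out' _)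
      have hVz : WittVector.truncate (n + 1) (verschiebung z) ∈
          AddSubgroup.closure (genSet (p := p) (n + 1) j) := by
        rw [← hΦz]
        refine AddSubgroup.closure_induction
          (p := fun u _ => Φ u ∈ AddSubgroup.closure (genSet (p := p) (n + 1) j))
          ?_ (by show Φ 0 ∈ _; rw [map_zero]; exact AddSubgroup.zero_mem _)
          (fun a b _ _ ha hb => by
            show Φ (a + b) ∈ _
            rw [map_add]; exact AddSubgroup.add_mem _ ha hb)
          (fun a _ ha => by
            show Φ (-a) ∈ _
            rw [map_neg]; exact AddSubgroup.neg_mem _ ha) ihz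
        rintro u ⟨l, hl, m₁, m₂, hm, rfl⟩
        show Φ _ ∈ _
        have : Φ (WittVector.truncate n
            (verschiebung^[l] (teichmuller p (X 0) ^ m₁ * teichmuller p (X 1) ^ m₂))) =
            WittVector.truncate (n + 1)
              (verschiebung^[l + 1] (teichmuller p (X 0) ^ m₁ * teichmuller p (X 1) ^ m₂)) := by
          rw [hΦ, Function.iterate_succ_apply']
          exact truncate_ver_congr (le_refl (n + 1)) (truncate_out' _)
        rw [this]
        exact AddSubgroup.subset_closure
          ⟨l + 1, Nat.succ_lt_succ hl, m₁, m₂, by rw [hm, pow_succ]; ring, rfl⟩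
      have hxsum : x = y + verschiebung z := by rw [hz]; ring
      rw [hxsum, map_add]
      exact AddSubgroup.add_mem _ hymem hVz

end Generic

end Statement11

/-- Let `k` be a field of characteristic `p`, `A` a commutative
`k`-algebra, and `n ≥ 1`.  For distinct `a, b ∈ A` and any `i ∈ ℕ`, the element
`[a+b]^i ∈ W_n(A)` lies in the `W_n(k)`-submodule generated by the elements
`V^l([a]^{m₁} [b]^{m₂})` with `0 ≤ l ≤ n−1` and `m₁ + m₂ = p^l · i`. -/
theorem teichmuller_add_pow_mem_span (p : ℕ) [Fact p.Prime]
    (k : Type*) [Field k] [CharP k p]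
    (A : Type*) [CommRing A] [Algebra k A]
    (n : ℕ) (hn : 1 ≤ n) (a b : A) (hab : a ≠ b) (i : ℕ) :
    tTeich p n (a + b) ^ i ∈
      Submodule.span (TruncatedWittVector p n k)
        {x : TruncatedWittVector p n A | ∃ l < n, ∃ m₁ m₂ : ℕ,
          m₁ + m₂ = p ^ l * i ∧
          x = (tVer p n)^[l] (tTeich p n a ^ m₁ * tTeich p n b ^ m₂)} := by
  classical
  set φ : Statement11.R2 →+* A := (MvPolynomial.aeval (R := ℤ) ![a, b]).toRingHom with hφ
  have hφ0 : φ (MvPolynomial.X 0) = a := by simp [hφ]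
  have hφ1 : φ (MvPolynomial.X 1) = b := by simp [hφ]
  have hE : WittVector.map Statement11.tau
        (WittVector.teichmuller p (MvPolynomial.X 0 + MvPolynomial.X 1) ^ i) =
      WittVector.teichmuller p (Polynomial.X : Polynomial Statement11.R2) ^ i *
        WittVector.map Statement11.cp
          (WittVector.teichmuller p (MvPolynomial.X 0 + MvPolynomial.X 1) ^ i) := by
    rw [map_pow, map_pow, WittVector.map_teichmuller, WittVector.map_teichmuller]
    have ht : Statement11.tau (MvPolynomial.X 0 + MvPolynomial.X 1) =
        Statement11.cp (MvPolynomial.X 0 + MvPolynomial.X 1) * Polynomial.X := by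
      rw [map_add, Statement11.tau_X, Statement11.tau_X]
      simp only [Statement11.cp]
      rw [map_add]
      ring
    rw [ht, Statement11.teich_mul, mul_pow, mul_comm]
  have hmem := Statement11.main_induction (p := p) n i _ hE
  have hgoal : tTeich p n (a + b) ^ i = twMap p n φ (WittVector.truncate n
      (WittVector.teichmuller p (MvPolynomial.X 0 + MvPolynomial.X 1) ^ i)) := by
    rw [Statement11.twMap_truncate, map_pow, WittVector.map_teichmuller, map_add, hφ0, hφ1,
      map_pow]
    rfl
  rw [hgoal]
  refine AddSubgroup.closure_induction
    (p := fun u _ => twMap p n φ u ∈ Submodule.span (TruncatedWittVector p n k)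
      {x : TruncatedWittVector p n A | ∃ l < n, ∃ m₁ m₂ : ℕ, m₁ + m₂ = p ^ l * i ∧
        x = (tVer p n)^[l] (tTeich p n a ^ m₁ * tTeich p n b ^ m₂)})
    ?_ (by show twMap p n φ 0 ∈ _; rw [map_zero]; exact Submodule.zero_mem _)
    (fun u v _ _ hu hv => by
      show twMap p n φ (u + v) ∈ _
      rw [map_add]; exact Submodule.add_mem _ hu hv)
    (fun u _ hu => by
      show twMap p n φ (-u) ∈ _
      rw [map_neg]; exact Submodule.neg_mem _ hu) hmem
  rintro u ⟨l, hl, m₁, m₂, hm, rfl⟩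
  show twMap p n φ _ ∈ _
  have heq : twMap p n φ (WittVector.truncate n
      (WittVector.verschiebung^[l] (WittVector.teichmuller p (MvPolynomial.X 0) ^ m₁ *
        WittVector.teichmuller p (MvPolynomial.X 1) ^ m₂))) =
      (tVer p n)^[l] (tTeich p n a ^ m₁ * tTeich p n b ^ m₂) := by
    rw [Statement11.twMap_truncate, Statement11.wmap_iterate_ver, map_mul, map_pow, map_pow,
      WittVector.map_teichmuller, WittVector.map_teichmuller, hφ0, hφ1, ← Statement11.tVer_iterate,
      map_mul, map_pow, map_pow]
    rfl
  rw [heq]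
  exact Submodule.subset_span ⟨l, hl, m₁, m₂, hm, rfl⟩
end

section
/- Let p be an odd prime, k a field of characteristic p, A a commutative k-algebra, and n ≥ 1. Regard W_n(A) as a W_n(k)-module via functoriality, and write [·] for the Teichmüller lift and V for the Verschiebung. Then for any r ≥ 2 pairwise distinct elements a₁,…,a_r ∈ A and any i ∈ ℕ, the element [a₁+⋯+a_r]^i of W_n(A) lies in the W_n(k)-submodule generated by the elements V^l([a₁]^{m₁}⋯[a_r]^{m_r}) with 0 ≤ l ≤ n−1 and m₁+⋯+m_r = p^l·i. -/
open WittVector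

section Aux1
variable {p : ℕ} [hp : Fact p.Prime] {R S T : Type*} [CommRing R] [CommRing S] [CommRing T]

lemma wv_map_map (f : S →+* T) (g : R →+* S) (x : WittVector p R) :
    WittVector.map f (WittVector.map g x) = WittVector.map (f.comp g) x := by
  apply WittVector.ext
  intro j
  simp [WittVector.map_coeff]

lemma wv_constantCoeff_apply (x : WittVector p R) :
    WittVector.constantCoeff x = x.coeff 0 := rfl

lemma wv_coeff_zero_sub (x y : WittVector p R) :
    (x - y).coeff 0 = x.coeff 0 - y.coeff 0 := by
  have := map_sub (WittVector.constantCoeff (p := p) (R := R)) x y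
  simpa [wv_constantCoeff_apply] using this

lemma wv_iterate_verschiebung_coeff_lt (l j : ℕ) (h : j < l) (x : WittVector p R) :
    (verschiebung^[l] x).coeff j = 0 := by
  induction l generalizing j x with
  | zero => omega
  | succ l ih =>
    rw [Function.iterate_succ_apply']
    cases j with
    | zero => exact verschiebung_coeff_zero _
    | succ j => rw [verschiebung_coeff_succ]; exact ih j (by omega) x

lemma wv_iterate_verschiebung_sub (l : ℕ) (x y : WittVector p R) :
    verschiebung^[l] (x - y) = verschiebung^[l] x - verschiebung^[l] y := by
  induction l generalizing x y with
  | zero => rfl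
  | succ l ih =>
    rw [Function.iterate_succ_apply, map_sub (verschiebung : WittVector p R →+ WittVector p R),
      ih, Function.iterate_succ_apply, Function.iterate_succ_apply]

lemma wv_iterate_verschiebung_sum {ι : Type*} (s : Finset ι) (f : ι → WittVector p R) (l : ℕ) :
    verschiebung^[l] (∑ ν ∈ s, f ν) = ∑ ν ∈ s, verschiebung^[l] (f ν) := by
  induction l generalizing f with
  | zero => rfl
  | succ l ih =>
    rw [Function.iterate_succ_apply,
      map_sum (verschiebung : WittVector p R →+ WittVector p R), ih]
    simp only [← Function.iterate_succ_apply]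

lemma wv_map_iterate_verschiebung (f : R →+* S) (l : ℕ) (x : WittVector p R) :
    WittVector.map f (verschiebung^[l] x) = verschiebung^[l] (WittVector.map f x) := by
  induction l generalizing x with
  | zero => rfl
  | succ l ih =>
    rw [Function.iterate_succ_apply, Function.iterate_succ_apply, ← map_verschiebung, ih]

lemma wv_eq_iterate_verschiebung {l : ℕ} {x : WittVector p R} (h : ∀ j < l, x.coeff j = 0) :
    x = verschiebung^[l] (WittVector.mk p fun j => x.coeff (j + l)) := by
  apply WittVector.ext
  intro j
  rcases lt_or_ge j l with hj | hj
  · rw [h j hj, wv_iterate_verschiebung_coeff_lt l j hj]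
  · obtain ⟨m, rfl⟩ : ∃ m, j = m + l := ⟨j - l, by omega⟩
    rw [iterate_verschiebung_coeff]
    rfl

lemma wv_frob_teich [CharP R p] (u : R) :
    frobenius (teichmuller p u) = teichmuller p (u ^ p) := by
  apply WittVector.ext
  intro n
  rw [coeff_frobenius_charP]
  cases n with
  | zero => rw [teichmuller_coeff_zero, teichmuller_coeff_zero]
  | succ j =>
    rw [teichmuller_coeff_pos p _ _ (Nat.succ_pos j), teichmuller_coeff_pos p _ _ (Nat.succ_pos j),
      zero_pow hp.out.ne_zero]

lemma wv_frob_iterate_teich [CharP R p] (l : ℕ) (u : R) :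
    frobenius^[l] (teichmuller p u) = teichmuller p (u ^ p ^ l) := by
  induction l generalizing u with
  | zero => simp
  | succ l ih =>
    rw [Function.iterate_succ_apply, wv_frob_teich, ih, ← pow_mul]
    congr 1
    rw [pow_succ']

end Aux1
section Psi
open MvPolynomial
variable {K : Type*} [CommRing K] {r : ℕ}

noncomputable def psiH (r : ℕ) (K : Type*) [CommRing K] :
    MvPolynomial (Fin r) K →+* MvPolynomial (Fin r) (Polynomial K) :=
  MvPolynomial.eval₂Hom (MvPolynomial.C.comp Polynomial.C)
    (fun j => MvPolynomial.C Polynomial.X * MvPolynomial.X j)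

noncomputable def iotaH (r : ℕ) (K : Type*) [CommRing K] :
    MvPolynomial (Fin r) K →+* MvPolynomial (Fin r) (Polynomial K) :=
  MvPolynomial.map Polynomial.C

lemma psiH_C (c : K) : psiH r K (C c) = C (Polynomial.C c) := by
  simp [psiH]

lemma psiH_X (j : Fin r) : psiH r K (X j) = C Polynomial.X * X j := by
  simp [psiH]

lemma iotaH_C (c : K) : iotaH r K (C c) = C (Polynomial.C c) := by
  simp [iotaH]

lemma iotaH_X (j : Fin r) : iotaH r K (X j) = X j := by
  simp [iotaH]

lemma iotaH_coeff (f : MvPolynomial (Fin r) K) (ν : Fin r →₀ ℕ) :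
    coeff ν (iotaH r K f) = Polynomial.C (coeff ν f) := by
  simp [iotaH, coeff_map]

lemma psiH_monomial (m : Fin r →₀ ℕ) (c : K) :
    psiH r K (monomial m c) = monomial m (Polynomial.X ^ (∑ j, m j) * Polynomial.C c) := by
  rw [psiH, eval₂Hom_monomial, monomial_eq,
    Finsupp.prod_fintype _ _ (fun j => pow_zero _), Finsupp.prod_fintype _ _ (fun j => pow_zero _)]
  simp only [mul_pow, Finset.prod_mul_distrib, RingHom.coe_comp, Function.comp_apply]
  rw [Finset.prod_pow_eq_pow_sum, map_mul, map_pow]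
  ring

lemma psiH_coeff (f : MvPolynomial (Fin r) K) (ν : Fin r →₀ ℕ) :
    coeff ν (psiH r K f) = Polynomial.X ^ (∑ j, ν j) * Polynomial.C (coeff ν f) := by
  induction f using MvPolynomial.induction_on' with
  | monomial m c =>
    rw [psiH_monomial, coeff_monomial, coeff_monomial]
    split
    · next h => subst h; rfl
    · simp
  | add f g hf hg =>
    rw [map_add, coeff_add, coeff_add, hf, hg, map_add, mul_add]

lemma psiH_homogeneous {f : MvPolynomial (Fin r) K} {d : ℕ}
    (h : psiH r K f = MvPolynomial.C Polynomial.X ^ d * iotaH r K f) :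
    ∀ ν ∈ f.support, (∑ j, ν j) = d := by
  intro ν hν
  by_contra hd
  have h1 : coeff ν (psiH r K f) = coeff ν (MvPolynomial.C Polynomial.X ^ d * iotaH r K f) := by
    rw [h]
  rw [psiH_coeff, ← map_pow, coeff_C_mul, iotaH_coeff] at h1
  have h2 := congrArg (fun q => Polynomial.coeff q (∑ j, ν j)) h1
  simp only [mul_comm (Polynomial.X ^ (∑ j, ν j)), mul_comm (Polynomial.X ^ d),
    Polynomial.coeff_C_mul, Polynomial.coeff_X_pow] at h2
  simp only [if_true, if_neg hd, mul_one, mul_zero] at h2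
  exact (mem_support_iff.mp hν) h2

end Psi
section Aux2
variable {p : ℕ} [hp : Fact p.Prime] {R S T : Type*} [CommRing R] [CommRing S] [CommRing T]

lemma wv_map_map' (f : S →+* T) (g : R →+* S) (x : WittVector p R) :
    WittVector.map f (WittVector.map g x) = WittVector.map (f.comp g) x := by
  apply WittVector.ext; intro j; simp [WittVector.map_coeff]

lemma twMap_truncate (n : ℕ) (f : R →+* S) (x : WittVector p R) :
    twMap p n f (WittVector.truncate n x) = WittVector.truncate n (WittVector.map f x) :=
  (WittVector.truncate n).liftOfRightInverse_comp_apply _ _ _ x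

lemma twMap_comp_apply (f : S →+* T) (g : R →+* S) (n : ℕ) (x : TruncatedWittVector p n R) :
    twMap p n f (twMap p n g x) = twMap p n (f.comp g) x := by
  obtain ⟨y, rfl⟩ := WittVector.truncate_surjective p n R x
  rw [twMap_truncate, twMap_truncate, twMap_truncate, wv_map_map']

lemma twAlgebraMap_eq (k A : Type*) [CommRing k] [CommRing A] [Algebra k A] (n : ℕ) :
    (algebraMap (TruncatedWittVector p n k) (TruncatedWittVector p n A)) =
      twMap p n (algebraMap k A) := rfl

lemma truncate_verschiebung_congr {n : ℕ} {x y : WittVector p R}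
    (h : WittVector.truncate n x = WittVector.truncate n y) :
    WittVector.truncate n (verschiebung x) = WittVector.truncate n (verschiebung y) := by
  have h' : ∀ i < n, (x - y).coeff i = 0 := by
    rw [← WittVector.mem_ker_truncate, RingHom.mem_ker, map_sub, h, sub_self]
  have h2 : WittVector.truncate n (verschiebung x - verschiebung y) = 0 := by
    rw [← map_sub (verschiebung : WittVector p R →+ WittVector p R), ← RingHom.mem_ker,
      WittVector.mem_ker_truncate]
    intro i hi
    cases i with
    | zero => exact verschiebung_coeff_zero _
    | succ j => rw [verschiebung_coeff_succ]; exact h' j (by omega)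
  rw [map_sub, sub_eq_zero] at h2
  exact h2

lemma tVer_truncate (n : ℕ) (x : WittVector p R) :
    tVer p n (WittVector.truncate n x) = WittVector.truncate n (verschiebung x) := by
  apply truncate_verschiebung_congr
  exact TruncatedWittVector.truncateFun_out _

lemma tVer_iterate (n l : ℕ) (x : WittVector p R) :
    (tVer p n)^[l] (WittVector.truncate n x) = WittVector.truncate n (verschiebung^[l] x) := by
  induction l generalizing x with
  | zero => rfl
  | succ l ih =>
    rw [Function.iterate_succ_apply, Function.iterate_succ_apply, tVer_truncate, ih]

end Aux2
section Core
open WittVector MvPolynomial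

variable {p : ℕ} [hp : Fact p.Prime]

lemma zmod_pow_pow (l : ℕ) (c : ZMod p) : c ^ p ^ l = c := by
  induction l with
  | zero => simp
  | succ l ih => rw [pow_succ, pow_mul, ih, ZMod.pow_card]

lemma wv_core (r i n : ℕ) (d : ℕ) :
    ∀ l : ℕ, n - l ≤ d → ∀ x : WittVector p (MvPolynomial (Fin r) (ZMod p)),
      (WittVector.map (psiH r (ZMod p)) x
        = WittVector.teichmuller p (MvPolynomial.C Polynomial.X) ^ i
            * WittVector.map (iotaH r (ZMod p)) x) →
      (∀ j < l, x.coeff j = 0) →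
      WittVector.truncate n x ∈ Submodule.span (TruncatedWittVector p n (ZMod p))
        {z : TruncatedWittVector p n (MvPolynomial (Fin r) (ZMod p)) | ∃ l' < n, ∃ m : Fin r → ℕ,
          (∑ j, m j) = p ^ l' * i ∧
          z = (tVer p n)^[l'] (∏ j, tTeich p n (MvPolynomial.X j) ^ m j)} := by
  haveI hB : CharP (MvPolynomial (Fin r) (ZMod p)) p :=
    charP_of_injective_ringHom (MvPolynomial.C_injective (Fin r) (ZMod p)) p
  induction d with
  | zero =>
    intro l hl x hH hz
    have h0 : WittVector.truncate n x = 0 := by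
      apply TruncatedWittVector.ext
      intro j
      rw [WittVector.coeff_truncate, TruncatedWittVector.coeff_zero]
      exact hz j (by omega)
    rw [h0]; exact Submodule.zero_mem _
  | succ d ih =>
    intro l hl x hH hz
    by_cases hln : n ≤ l
    · exact ih l (by omega) x hH hz
    push_neg at hln
    set t : MvPolynomial (Fin r) (Polynomial (ZMod p)) := MvPolynomial.C Polynomial.X with htdef
    set y := WittVector.mk p (fun j => x.coeff (j + l)) with hydef
    have hxy : x = verschiebung^[l] y := wv_eq_iterate_verschiebung hz
    have hy0 : y.coeff 0 = x.coeff l := by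
      rw [hydef]; show x.coeff (0 + l) = x.coeff l; rw [zero_add]
    -- Step 1 : the coefficient in degree l is homogeneous of degree p^l * i
    have hRHS : WittVector.teichmuller p t ^ i * WittVector.map (iotaH r (ZMod p)) x
        = verschiebung^[l]
            (WittVector.map (iotaH r (ZMod p)) y * WittVector.teichmuller p (t ^ p ^ l) ^ i) := by
      rw [hxy, wv_map_iterate_verschiebung, mul_comm, iterate_verschiebung_mul_left]
      congr 2
      rw [iterate_map_pow, wv_frob_iterate_teich]
    have hhom : psiH r (ZMod p) (x.coeff l)
        = t ^ (p ^ l * i) * iotaH r (ZMod p) (x.coeff l) := by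
      have h1 : (WittVector.map (psiH r (ZMod p)) x).coeff l
          = (WittVector.teichmuller p t ^ i * WittVector.map (iotaH r (ZMod p)) x).coeff l := by
        rw [hH]
      rw [WittVector.map_coeff, hRHS] at h1
      have h2 : (verschiebung^[l] (WittVector.map (iotaH r (ZMod p)) y *
          WittVector.teichmuller p (t ^ p ^ l) ^ i)).coeff l
          = (WittVector.map (iotaH r (ZMod p)) y *
              WittVector.teichmuller p (t ^ p ^ l) ^ i).coeff 0 := by
        simpa using WittVector.iterate_verschiebung_coeff
          (WittVector.map (iotaH r (ZMod p)) y * WittVector.teichmuller p (t ^ p ^ l) ^ i) l 0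
      rw [h2, WittVector.mul_coeff_zero, WittVector.map_coeff, hy0,
        ← map_pow, WittVector.teichmuller_coeff_zero, ← pow_mul] at h1
      rw [h1, mul_comm]
    have hsupp : ∀ ν ∈ (x.coeff l).support, (∑ j, ν j) = p ^ l * i := psiH_homogeneous hhom
    -- Step 2 : build the correction term g
    set Pi : (Fin r →₀ ℕ) → WittVector p (MvPolynomial (Fin r) (ZMod p)) := fun ν =>
      ∏ j, WittVector.teichmuller p (MvPolynomial.X j : MvPolynomial (Fin r) (ZMod p)) ^ ν j
      with hPidef
    set w : WittVector p (MvPolynomial (Fin r) (ZMod p)) := ∑ ν ∈ (x.coeff l).support,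
      WittVector.teichmuller p
        (MvPolynomial.C (MvPolynomial.coeff ν (x.coeff l)) : MvPolynomial (Fin r) (ZMod p))
        * Pi ν with hwdef
    have hw0 : w.coeff 0 = x.coeff l := by
      have hcc : WittVector.constantCoeff w = x.coeff l := by
        rw [hwdef, map_sum]
        have hterm : ∀ ν ∈ (x.coeff l).support,
            WittVector.constantCoeff
              (WittVector.teichmuller p
                (MvPolynomial.C (MvPolynomial.coeff ν (x.coeff l)) : MvPolynomial (Fin r) (ZMod p))
                * Pi ν)
            = MvPolynomial.monomial ν (MvPolynomial.coeff ν (x.coeff l)) := by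
          intro ν _
          rw [map_mul, hPidef, map_prod]
          simp only [map_pow, wv_constantCoeff_apply, WittVector.teichmuller_coeff_zero]
          rw [MvPolynomial.monomial_eq, Finsupp.prod_fintype _ _ (fun j => pow_zero _)]
        rw [Finset.sum_congr rfl hterm, MvPolynomial.support_sum_monomial_coeff]
      simpa [wv_constantCoeff_apply] using hcc
    have hpsiPi : ∀ ν ∈ (x.coeff l).support,
        WittVector.map (psiH r (ZMod p)) (Pi ν)
        = WittVector.teichmuller p t ^ (p ^ l * i)
            * WittVector.map (iotaH r (ZMod p)) (Pi ν) := by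
      intro ν hν
      rw [hPidef]
      simp only [map_prod, map_pow, WittVector.map_teichmuller, psiH_X, iotaH_X,
        map_mul (WittVector.teichmuller p), mul_pow]
      rw [Finset.prod_mul_distrib, Finset.prod_pow_eq_pow_sum, hsupp ν hν]
    have hpsiw : WittVector.map (psiH r (ZMod p)) w
        = WittVector.teichmuller p t ^ (p ^ l * i) * WittVector.map (iotaH r (ZMod p)) w := by
      rw [hwdef, map_sum, map_sum, Finset.mul_sum]
      apply Finset.sum_congr rfl
      intro ν hν
      rw [map_mul, map_mul, WittVector.map_teichmuller, WittVector.map_teichmuller,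
        psiH_C, iotaH_C, hpsiPi ν hν]
      ring
    set g := verschiebung^[l] w with hgdef
    have hgH : WittVector.map (psiH r (ZMod p)) g
        = WittVector.teichmuller p t ^ i * WittVector.map (iotaH r (ZMod p)) g := by
      rw [hgdef, wv_map_iterate_verschiebung, hpsiw, wv_map_iterate_verschiebung,
        mul_comm (WittVector.teichmuller p t ^ i), iterate_verschiebung_mul_left]
      refine congrArg _ ?_
      have hteq : (WittVector.teichmuller p t) ^ (p ^ l * i)
          = WittVector.teichmuller p (t ^ p ^ l) ^ i := by
        have h1 : WittVector.teichmuller p (t ^ (p ^ l * i))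
            = WittVector.teichmuller p ((t ^ p ^ l) ^ i) := by rw [pow_mul]
        rw [map_pow, map_pow] at h1
        exact h1
      rw [iterate_map_pow, wv_frob_iterate_teich, hteq]
      exact mul_comm _ _
    have hxg : x - g = verschiebung^[l] (y - w) := by
      rw [hxy, hgdef, wv_iterate_verschiebung_sub]
    have hz' : ∀ j < l + 1, (x - g).coeff j = 0 := by
      intro j hj
      rcases Nat.lt_succ_iff_lt_or_eq.mp hj with hj | hjeq
      · rw [hxg]; exact wv_iterate_verschiebung_coeff_lt l j hj _
      · rw [hjeq, hxg]
        have h3 : (verschiebung^[l] (y - w)).coeff (0 + l) = (y - w).coeff 0 :=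
          WittVector.iterate_verschiebung_coeff _ l 0
        rw [zero_add] at h3
        rw [h3, wv_coeff_zero_sub, hy0, hw0, sub_self]
    have hH' : WittVector.map (psiH r (ZMod p)) (x - g)
        = WittVector.teichmuller p t ^ i * WittVector.map (iotaH r (ZMod p)) (x - g) := by
      rw [map_sub, map_sub, hH, hgH, mul_sub]
    -- Step 3 : truncate n g lies in the span
    have hgmem : WittVector.truncate n g ∈ Submodule.span (TruncatedWittVector p n (ZMod p))
        {z : TruncatedWittVector p n (MvPolynomial (Fin r) (ZMod p)) | ∃ l' < n, ∃ m : Fin r → ℕ,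
          (∑ j, m j) = p ^ l' * i ∧
          z = (tVer p n)^[l'] (∏ j, tTeich p n (MvPolynomial.X j) ^ m j)} := by
      rw [hgdef, hwdef, wv_iterate_verschiebung_sum, map_sum]
      apply Submodule.sum_mem
      intro ν hν
      have hfix : WittVector.frobenius^[l]
          (WittVector.teichmuller p
            (MvPolynomial.C (MvPolynomial.coeff ν (x.coeff l)) : MvPolynomial (Fin r) (ZMod p)))
          = WittVector.teichmuller p
            (MvPolynomial.C (MvPolynomial.coeff ν (x.coeff l)) : MvPolynomial (Fin r) (ZMod p)) := by
        rw [wv_frob_iterate_teich, ← map_pow, zmod_pow_pow]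
      have hPiVer : verschiebung^[l]
          (WittVector.teichmuller p
            (MvPolynomial.C (MvPolynomial.coeff ν (x.coeff l)) : MvPolynomial (Fin r) (ZMod p))
            * Pi ν)
          = WittVector.teichmuller p
            (MvPolynomial.C (MvPolynomial.coeff ν (x.coeff l)) : MvPolynomial (Fin r) (ZMod p))
            * verschiebung^[l] (Pi ν) := by
        calc verschiebung^[l] (_ * Pi ν) = verschiebung^[l] (Pi ν * WittVector.frobenius^[l] _) := by
              rw [hfix, mul_comm]
          _ = verschiebung^[l] (Pi ν) * _ := by rw [← iterate_verschiebung_mul_left]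
          _ = _ := mul_comm _ _
      rw [hPiVer, map_mul]
      have hsc : WittVector.truncate n
          (WittVector.teichmuller p
            (MvPolynomial.C (MvPolynomial.coeff ν (x.coeff l)) : MvPolynomial (Fin r) (ZMod p)))
          = algebraMap (TruncatedWittVector p n (ZMod p))
              (TruncatedWittVector p n (MvPolynomial (Fin r) (ZMod p)))
              (WittVector.truncate n
                (WittVector.teichmuller p (MvPolynomial.coeff ν (x.coeff l)))) := by
        rw [twAlgebraMap_eq, twMap_truncate, WittVector.map_teichmuller, MvPolynomial.algebraMap_eq]
      rw [hsc, ← Algebra.smul_def]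
      apply Submodule.smul_mem
      apply Submodule.subset_span
      refine ⟨l, hln, (fun j => ν j), hsupp ν hν, ?_⟩
      rw [hPidef, ← tVer_iterate]
      congr 1
      rw [map_prod]
      exact Finset.prod_congr rfl fun j _ => by rw [map_pow]; rfl
    -- Step 4 : conclude by induction
    have hmem' := ih (l + 1) (by omega) (x - g) hH' hz'
    have hsplit : WittVector.truncate n x
        = WittVector.truncate n (x - g) + WittVector.truncate n g := by
      rw [← map_add, sub_add_cancel]
    rw [hsplit]
    exact Submodule.add_mem _ hmem' hgmem

end Core
/-- Let `p` be an odd prime, `k` a field of characteristic `p`, `A` a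
commutative `k`-algebra, and `n ≥ 1`.  For `r ≥ 2` pairwise distinct elements
`a₁, …, a_r ∈ A` and any `i ∈ ℕ`, the element `[a₁ + ⋯ + a_r]^i ∈ W_n(A)` lies in the
`W_n(k)`-submodule generated by the elements `V^l([a₁]^{m₁} ⋯ [a_r]^{m_r})` with
`0 ≤ l ≤ n−1` and `m₁ + ⋯ + m_r = p^l · i`. -/
theorem teichmuller_sum_pow_mem_span (p : ℕ) [Fact p.Prime] (hp2 : p ≠ 2)
    (k : Type*) [Field k] [CharP k p]
    (A : Type*) [CommRing A] [Algebra k A]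
    (n : ℕ) (hn : 1 ≤ n) (r : ℕ) (hr : 2 ≤ r)
    (a : Fin r → A) (ha : Function.Injective a) (i : ℕ) :
    tTeich p n (∑ j, a j) ^ i ∈
      Submodule.span (TruncatedWittVector p n k)
        {x : TruncatedWittVector p n A | ∃ l < n, ∃ m : Fin r → ℕ,
          (∑ j, m j) = p ^ l * i ∧
          x = (tVer p n)^[l] (∏ j, tTeich p n (a j) ^ m j)} := by
  classical
  -- The universal element `[X₁ + ⋯ + X_r]^i` over `ZMod p` satisfies the scaling identity.
  have hstart : WittVector.map (psiH r (ZMod p))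
        (WittVector.teichmuller p (∑ j : Fin r, MvPolynomial.X j) ^ i)
      = WittVector.teichmuller p (MvPolynomial.C Polynomial.X) ^ i
          * WittVector.map (iotaH r (ZMod p))
              (WittVector.teichmuller p (∑ j : Fin r, MvPolynomial.X j) ^ i) := by
    rw [map_pow, map_pow, WittVector.map_teichmuller, WittVector.map_teichmuller]
    have hs : psiH r (ZMod p) (∑ j : Fin r, MvPolynomial.X j)
        = MvPolynomial.C Polynomial.X * iotaH r (ZMod p) (∑ j : Fin r, MvPolynomial.X j) := by
      rw [map_sum, map_sum, Finset.mul_sum]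
      exact Finset.sum_congr rfl fun j _ => by rw [psiH_X, iotaH_X]
    rw [hs, map_mul, mul_pow]
  have key := wv_core (p := p) r i n n 0 (by omega)
    (WittVector.teichmuller p (∑ j : Fin r, MvPolynomial.X j) ^ i) hstart
    (fun j hj => absurd hj (by omega))
  -- Transfer along the evaluation map `X j ↦ a j`.
  set χ : ZMod p →+* k := ZMod.castHom (dvd_refl p) k with hχdef
  set φ : MvPolynomial (Fin r) (ZMod p) →+* A :=
    MvPolynomial.eval₂Hom ((algebraMap k A).comp χ) a with hφdef
  have hgoal : tTeich p n (∑ j, a j) ^ i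
      = twMap p n φ (WittVector.truncate n
          (WittVector.teichmuller p (∑ j : Fin r, MvPolynomial.X j) ^ i)) := by
    rw [twMap_truncate, map_pow, WittVector.map_teichmuller]
    have hφs : φ (∑ j : Fin r, MvPolynomial.X j) = ∑ j, a j := by
      rw [map_sum]
      exact Finset.sum_congr rfl fun j _ => MvPolynomial.eval₂Hom_X' _ _ _
    rw [hφs]
    simp only [tTeich, ← map_pow]
  rw [hgoal]
  refine Submodule.span_induction (p := fun z _ => twMap p n φ z ∈
      Submodule.span (TruncatedWittVector p n k)
        {x : TruncatedWittVector p n A | ∃ l < n, ∃ m : Fin r → ℕ,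
          (∑ j, m j) = p ^ l * i ∧
          x = (tVer p n)^[l] (∏ j, tTeich p n (a j) ^ m j)}) ?_ ?_ ?_ ?_ key
  · -- generators map to generators
    rintro z ⟨l', hl', m, hm, rfl⟩
    apply Submodule.subset_span
    refine ⟨l', hl', m, hm, ?_⟩
    have hprod : WittVector.truncate n
          (∏ j, WittVector.teichmuller p (MvPolynomial.X j : MvPolynomial (Fin r) (ZMod p)) ^ m j)
        = ∏ j, tTeich p n (MvPolynomial.X j : MvPolynomial (Fin r) (ZMod p)) ^ m j := by
      rw [map_prod]
      exact Finset.prod_congr rfl fun j _ => by rw [map_pow]; rfl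
    have hmapP : WittVector.map φ
          (∏ j, WittVector.teichmuller p (MvPolynomial.X j : MvPolynomial (Fin r) (ZMod p)) ^ m j)
        = ∏ j, WittVector.teichmuller p (a j) ^ m j := by
      rw [map_prod]
      exact Finset.prod_congr rfl fun j _ => by
        rw [map_pow, WittVector.map_teichmuller, MvPolynomial.eval₂Hom_X']
    rw [← hprod, tVer_iterate, twMap_truncate, wv_map_iterate_verschiebung, hmapP,
      ← tVer_iterate]
    congr 1
    rw [map_prod]
    exact Finset.prod_congr rfl fun j _ => by rw [map_pow]; rfl
  · show twMap p n φ _ ∈ Submodule.span (TruncatedWittVector p n k) _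
    rw [map_zero]; exact Submodule.zero_mem _
  · intro u v _ _ hu hv
    show twMap p n φ _ ∈ Submodule.span (TruncatedWittVector p n k) _
    rw [map_add]; exact Submodule.add_mem _ hu hv
  · intro c z _ hcz
    show twMap p n φ _ ∈ Submodule.span (TruncatedWittVector p n k) _
    have hcomp : φ.comp (algebraMap (ZMod p) (MvPolynomial (Fin r) (ZMod p)))
        = (algebraMap k A).comp χ := RingHom.ext_zmod _ _
    have hsm : twMap p n φ (c • z) = (twMap p n χ c) • (twMap p n φ z) := by
      rw [Algebra.smul_def, Algebra.smul_def, twAlgebraMap_eq, twAlgebraMap_eq, map_mul,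
        twMap_comp_apply, twMap_comp_apply, hcomp]
    rw [hsm]
    exact Submodule.smul_mem _ _ hcz
end

section
/- Let p be a prime, A a commutative ring, and W(A) its ring of p-typical Witt vectors, with Teichmüller lift [·] and Verschiebung V. Let a₁,…,a_m ∈ A, and for 𝐝 = (d₁,…,d_m) ∈ ℕ^m write [𝐚]^𝐝 := [a₁]^{d₁}⋯[a_m]^{d_m} ∈ W(A). Let r ≥ 1, let 𝐝₁,…,𝐝_r ∈ ℕ^m, and let s₁,…,s_r ∈ ℕ with s_r = max_{1≤i≤r} s_i. Then ∏_{i=1}^r V^{s_i}([𝐚]^{𝐝_i}) = p^{s₁+⋯+s_{r−1}} · V^{s_r}([𝐚]^{Σ_{i=1}^r p^{s_r−s_i}·𝐝_i}), where linear combinations of exponent vectors are taken componentwise. -/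
open WittVector Function

section FrobTeich

variable (p : ℕ) [hp : Fact p.Prime]

private theorem frob_teich_aux₁ {R : Type*} (x : MvPolynomial R ℚ) :
    frobenius (teichmuller p x) = teichmuller p x ^ p := by
  apply (ghostMap.bijective_of_invertible p (MvPolynomial R ℚ)).1
  ext1 n
  simp only [map_pow, Pi.pow_apply, ghostMap_apply, ghostComponent_frobenius,
    ghostComponent_teichmuller, ← pow_mul, ← pow_succ]

private theorem frob_teich_aux₂ {R : Type*} (x : MvPolynomial R ℤ) :
    frobenius (teichmuller p x) = teichmuller p x ^ p := by
  refine WittVector.map_injective (MvPolynomial.map (Int.castRingHom ℚ))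
    (MvPolynomial.map_injective _ Int.cast_injective) ?_
  rw [map_pow, map_teichmuller, (frobenius_isPoly p).map, map_teichmuller,
    frob_teich_aux₁]

theorem frobenius_teichmuller' {R : Type*} [CommRing R] (a : R) :
    frobenius (teichmuller p a) = teichmuller p a ^ p := by
  rcases MvPolynomial.counit_surjective R a with ⟨a, rfl⟩
  rw [← map_teichmuller, ← (frobenius_isPoly p).map, frob_teich_aux₂, map_pow,
    map_teichmuller]

end FrobTeich

section VMul

variable {p : ℕ} [hp : Fact p.Prime] {A : Type*} [CommRing A]

theorem verschiebung_mul_verschiebung (x y : WittVector p A) :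
    verschiebung x * verschiebung y = (p : WittVector p A) * verschiebung (x * y) := by
  rw [← verschiebung_mul_frobenius x (verschiebung y), frobenius_verschiebung, ← mul_assoc,
    mul_comm x y, mul_comm _ (p : WittVector p A)]
  rw [show ((p : ℕ) : WittVector p A) * (y * x) = (p : ℕ) • (y * x) by
    rw [nsmul_eq_mul], map_nsmul, nsmul_eq_mul, mul_comm y x]

theorem iterate_verschiebung_mul_same (s : ℕ) (x y : WittVector p A) :
    verschiebung^[s] x * verschiebung^[s] y =
      (p : WittVector p A) ^ s * verschiebung^[s] (x * y) := by
  induction s with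
  | zero => simp
  | succ s ih =>
      rw [iterate_succ_apply', iterate_succ_apply', verschiebung_mul_verschiebung, ih,
        show ((p : WittVector p A) ^ s * verschiebung^[s] (x * y) : WittVector p A)
          = (p : ℕ) ^ s • verschiebung^[s] (x * y) by rw [nsmul_eq_mul]; push_cast; ring,
        map_nsmul, iterate_succ_apply', nsmul_eq_mul, pow_succ]
      push_cast
      ring

theorem iterate_verschiebung_mul_le {s t : ℕ} (h : s ≤ t) (x y : WittVector p A) :
    verschiebung^[s] x * verschiebung^[t] y =
      (p : WittVector p A) ^ s * verschiebung^[t] (frobenius^[t - s] x * y) := by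
  obtain ⟨k, rfl⟩ := Nat.exists_eq_add_of_le h
  rw [Nat.add_sub_cancel_left, iterate_add_apply, iterate_verschiebung_mul_same,
    mul_comm x, iterate_verschiebung_mul_left, mul_comm y, ← iterate_add_apply]

theorem iterate_frobenius_teichmuller_prod (k m : ℕ) (a : Fin m → A) (d : Fin m → ℕ) :
    frobenius^[k] (∏ j : Fin m, teichmuller p (a j) ^ d j) =
      ∏ j : Fin m, teichmuller p (a j) ^ (p ^ k * d j) := by
  induction k with
  | zero => simp
  | succ k ih =>
      rw [iterate_succ_apply', ih, map_prod]
      refine Finset.prod_congr rfl fun j _ => ?_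
      rw [map_pow, frobenius_teichmuller' p, ← pow_mul]
      congr 1
      ring

end VMul

/-- The `i`-fold iterate of the Verschiebung on the ring of `p`-typical Witt vectors. -/
noncomputable def vIterate (p : ℕ) [Fact p.Prime] {A : Type*} [CommRing A] (i : ℕ)
    (x : WittVector p A) : WittVector p A :=
  (fun y : WittVector p A => WittVector.verschiebung y)^[i] x

theorem vIterate_def (p : ℕ) [Fact p.Prime] {A : Type*} [CommRing A] (i : ℕ)
    (x : WittVector p A) : vIterate p i x = verschiebung^[i] x := rfl

/-- In the ring of `p`-typical Witt vectors `W(A)`, for elements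
`a₁, …, a_m ∈ A`, exponent vectors `𝐝₁, …, 𝐝_r ∈ ℕ^m` (here indexed by `Fin (r+1)` so that
there is at least one index, the last one being `Fin.last r`) and natural numbers
`s₁, …, s_r` whose maximum is the last one, one has
`∏ᵢ V^{sᵢ}([𝐚]^{𝐝ᵢ}) = p^{s₁+⋯+s_{r−1}} ⬝ V^{s_r}([𝐚]^{∑ᵢ p^{s_r−sᵢ}·𝐝ᵢ})`,
where `[𝐚]^𝐝 = [a₁]^{d₁} ⋯ [a_m]^{d_m}` is formed from Teichmüller lifts. -/
theorem verschiebung_teichmuller_prod (p : ℕ) [Fact p.Prime] (A : Type*) [CommRing A]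
    (m : ℕ) (a : Fin m → A) (r : ℕ) (d : Fin (r + 1) → Fin m → ℕ)
    (s : Fin (r + 1) → ℕ) (hs : ∀ i, s i ≤ s (Fin.last r)) :
    (∏ i : Fin (r + 1),
        vIterate p (s i) (∏ j : Fin m, WittVector.teichmuller p (a j) ^ d i j)) =
      (p : WittVector p A) ^ (∑ i : Fin r, s i.castSucc) *
        vIterate p (s (Fin.last r))
          (∏ j : Fin m,
            WittVector.teichmuller p (a j) ^ (∑ i : Fin (r + 1), p ^ (s (Fin.last r) - s i) * d i j)) := by
  induction r with
  | zero =>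
      simp [vIterate_def, Fin.last, Fin.sum_univ_one]
  | succ r ih =>
      rw [Fin.prod_univ_succ,
        ih (fun i => d i.succ) (fun i => s i.succ)
          (fun i => by simpa only [Fin.succ_last] using hs i.succ),
        mul_left_comm]
      simp only [vIterate_def, Fin.succ_last]
      rw [iterate_verschiebung_mul_le (hs 0), iterate_frobenius_teichmuller_prod,
        ← Finset.prod_mul_distrib]
      have hexp : ∀ j : Fin m,
          (teichmuller p (a j)) ^ (p ^ (s (Fin.last (r + 1)) - s 0) * d 0 j) *
            (teichmuller p (a j)) ^
              (∑ i : Fin (r + 1), p ^ (s (Fin.last (r + 1)) - s i.succ) * d i.succ j) =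
          (teichmuller p (a j)) ^
            (∑ i : Fin (r + 2), p ^ (s (Fin.last (r + 1)) - s i) * d i j) := by
        intro j
        rw [← pow_add]
        congr 1
        exact (Fin.sum_univ_succ (fun i : Fin (r + 2) => p ^ (s (Fin.last (r + 1)) - s i) * d i j)).symm
      rw [Finset.prod_congr rfl fun j _ => hexp j]
      rw [show (∑ i : Fin (r + 1), s i.castSucc)
            = s (0 : Fin (r + 2)) + ∑ i : Fin r, s i.castSucc.succ by
          rw [Fin.sum_univ_succ]
          simp [Fin.succ_castSucc, -Fin.castSucc_succ]]
      rw [pow_add, mul_left_comm, mul_assoc]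
end

section
/- Let p be a prime and A a commutative ring with p·1 = 0 in A. For r ∈ ℕ let ∂^{[r]} denote the r-th Hasse derivative on the polynomial ring A[t]. Then for every f ∈ A[t] and every r ∈ ℕ: if p divides r then ∂^{[r]}(f^p) = (∂^{[r/p]}(f))^p, and if p does not divide r then ∂^{[r]}(f^p) = 0. -/
/-- Let `p` be a prime and `A` a commutative ring in which `p • 1 = 0`.
For the `r`-th Hasse derivative `∂^{[r]}` on `A[t]` one has, for every polynomial `f`:
`∂^{[r]} (f ^ p) = (∂^{[r/p]} f) ^ p` if `p ∣ r`, and `∂^{[r]} (f ^ p) = 0` otherwise. -/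
theorem hasseDeriv_pow_char (p : ℕ) [Fact p.Prime] (A : Type*) [CommRing A]
    (hpA : (p : A) = 0) (f : Polynomial A) (r : ℕ) :
    (p ∣ r → Polynomial.hasseDeriv r (f ^ p) = Polynomial.hasseDeriv (r / p) f ^ p) ∧
    (¬ p ∣ r → Polynomial.hasseDeriv r (f ^ p) = 0) := by
  classical
  have hp := Fact.out (p := p.Prime)
  rcases subsingleton_or_nontrivial A with hA | hA
  · exact ⟨fun _ => Subsingleton.elim _ _, fun _ => Subsingleton.elim _ _⟩
  -- `A` has characteristic `p`
  haveI hchar : CharP A p := by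
    have hdvd : ringChar A ∣ p := ringChar.dvd hpA
    rcases (hp.eq_one_or_self_of_dvd _ hdvd) with h1 | h1
    · exact absurd h1 CharP.ringChar_ne_one
    · exact ringChar.of_eq h1
  -- Lucas-type consequences
  have lucas1 : ∀ m k : ℕ, (((p * m).choose (p * k) : ℕ) : A) = ((m.choose k : ℕ) : A) := by
    intro m k
    refine CharP.natCast_eq_natCast' A p ?_
    have h := Choose.choose_modEq_choose_mod_mul_choose_div_nat
      (n := p * m) (k := p * k) (p := p)
    simpa [Nat.mul_mod_right, Nat.mul_div_cancel_left _ hp.pos] using h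
  have lucas0 : ¬ p ∣ r → ∀ N : ℕ, p ∣ N → ((N.choose r : ℕ) : A) = 0 := by
    intro hr N hN
    have hN0 : N % p = 0 := Nat.eq_zero_of_dvd_of_lt
      ((Nat.dvd_mod_iff dvd_rfl).mpr hN) (Nat.mod_lt _ hp.pos)
    have hrp : 0 < r % p := Nat.pos_of_ne_zero fun h => hr (Nat.dvd_of_mod_eq_zero h)
    have h := Choose.choose_modEq_choose_mod_mul_choose_div_nat
      (n := N) (k := r) (p := p)
    have h0 : N.choose r ≡ 0 [MOD p] := by
      simpa [hN0, Nat.choose_eq_zero_of_lt hrp] using h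
    simpa using CharP.natCast_eq_natCast' A p h0
  -- `hasseDeriv` commutes with `map`
  have hmap : ∀ (k : ℕ) (g : Polynomial A),
      Polynomial.hasseDeriv k (g.map (frobenius A p))
        = (Polynomial.hasseDeriv k g).map (frobenius A p) := by
    intro k g
    ext n
    simp [Polynomial.hasseDeriv_coeff, Polynomial.coeff_map]
  -- `hasseDeriv` on `expand`
  have hexp1 : ∀ (k : ℕ) (g : Polynomial A),
      Polynomial.hasseDeriv (p * k) (Polynomial.expand A p g)
        = Polynomial.expand A p (Polynomial.hasseDeriv k g) := by
    intro k g
    ext n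
    simp only [Polynomial.hasseDeriv_coeff, Polynomial.coeff_expand hp.pos]
    by_cases hn : p ∣ n
    · obtain ⟨m, rfl⟩ := hn
      have h1 : p ∣ p * m + p * k := Dvd.dvd.add (dvd_mul_right p m) (dvd_mul_right p k)
      have h2 : (p * m + p * k) / p = m + k := by
        rw [← Nat.mul_add, Nat.mul_div_cancel_left _ hp.pos]
      simp only [if_pos h1, if_pos (dvd_mul_right p m),
        Nat.mul_div_cancel_left _ hp.pos, Polynomial.hasseDeriv_coeff, h2]
      rw [show p * m + p * k = p * (m + k) from (Nat.mul_add p m k).symm, lucas1 (m + k) k]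
    · have h1 : ¬ p ∣ n + p * k := fun h =>
        hn ((Nat.dvd_add_iff_left (dvd_mul_right p k)).mpr h)
      rw [if_neg h1, if_neg hn, mul_zero]
  have hexp0 : ¬ p ∣ r → ∀ g : Polynomial A,
      Polynomial.hasseDeriv r (Polynomial.expand A p g) = 0 := by
    intro hr g
    ext n
    simp only [Polynomial.hasseDeriv_coeff, Polynomial.coeff_expand hp.pos,
      Polynomial.coeff_zero]
    by_cases hd : p ∣ n + r
    · rw [if_pos hd, lucas0 hr (n + r) hd, zero_mul]
    · rw [if_neg hd, mul_zero]
  have key : f ^ p = (Polynomial.expand A p f).map (frobenius A p) :=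
    (Polynomial.map_frobenius_expand p f).symm
  constructor
  · rintro ⟨k, rfl⟩
    rw [key, hmap, hexp1, Nat.mul_div_cancel_left _ hp.pos]
    exact Polynomial.map_frobenius_expand p _
  · intro hr
    rw [key, hmap, hexp0 hr, Polynomial.map_zero]
end

section
/- Let p be a prime, R a commutative ring, and 0 ≤ j ≤ n integers. Let c₁,…,c_m ∈ ℕ with c₁+⋯+c_m = p^{n−j}, and let M := (p^{n−j})! / (c₁!⋯c_m!) be the corresponding multinomial coefficient. If a₁,…,a_m, b₁,…,b_m ∈ R satisfy a_i ≡ b_i (mod pR) for every i, then p^j·M·a₁^{c₁}⋯a_m^{c_m} ≡ p^j·M·b₁^{c₁}⋯b_m^{c_m} (mod p^{n+1}R). -/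
open MvPolynomial Finset

private lemma coeff_linear_pow {R : Type*} [CommRing R] (m N : ℕ) (c : Fin m → ℕ)
    (hc : ∑ i, c i = N) (a : Fin m → R) :
    MvPolynomial.coeff (Finsupp.equivFunOnFinite.symm c)
        ((∑ i, MvPolynomial.C (a i) * MvPolynomial.X i) ^ N)
      = (Nat.multinomial Finset.univ c : R) * ∏ i, a i ^ c i := by
  classical
  rw [Finset.sum_pow_eq_sum_piAntidiag]
  have hterm : ∀ k : Fin m → ℕ,
      (Nat.multinomial Finset.univ k : MvPolynomial (Fin m) R) *
          ∏ i, (MvPolynomial.C (a i) * MvPolynomial.X i) ^ k i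
        = MvPolynomial.monomial (Finsupp.equivFunOnFinite.symm k)
            ((Nat.multinomial Finset.univ k : R) * ∏ i, a i ^ k i) := by
    intro k
    have h1 : ∏ i, (MvPolynomial.C (a i) * MvPolynomial.X i) ^ k i
        = MvPolynomial.C (∏ i, a i ^ k i) * ∏ i, MvPolynomial.X i ^ k i := by
      rw [map_prod, ← Finset.prod_mul_distrib]
      simp [mul_pow]
    have h2 : (Finsupp.equivFunOnFinite.symm k).prod
          (fun i e => (MvPolynomial.X i : MvPolynomial (Fin m) R) ^ e)
        = ∏ i, MvPolynomial.X i ^ k i := by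
      rw [Finsupp.prod]
      refine Finset.prod_subset (Finset.subset_univ _) ?_
      intro i _ hi
      have hk : k i = 0 := by
        simpa using Finsupp.notMem_support_iff.mp hi
      simp [hk]
    rw [h1, MvPolynomial.monomial_eq, h2, map_mul, map_natCast]
    ring
  simp_rw [hterm]
  rw [MvPolynomial.coeff_sum]
  rw [Finset.sum_eq_single c]
  · simp [MvPolynomial.coeff_monomial]
  · intro k hk hkc
    rw [MvPolynomial.coeff_monomial, if_neg]
    intro h
    exact hkc (Finsupp.equivFunOnFinite.symm.injective h)
  · intro hcmem
    exact absurd (by simp [hc]) hcmem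

private lemma key_dvd {R : Type*} [CommRing R] (p e m : ℕ) (c : Fin m → ℕ)
    (hc : ∑ i, c i = p ^ e) (a b : Fin m → R) (h : ∀ i, (p : R) ∣ a i - b i) :
    (p : R) ^ (e + 1) ∣
      (Nat.multinomial Finset.univ c : R) * ∏ i, a i ^ c i -
        (Nat.multinomial Finset.univ c : R) * ∏ i, b i ^ c i := by
  classical
  set A : MvPolynomial (Fin m) R := ∑ i, MvPolynomial.C (a i) * MvPolynomial.X i with hA
  set B : MvPolynomial (Fin m) R := ∑ i, MvPolynomial.C (b i) * MvPolynomial.X i with hB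
  have hAB : (p : MvPolynomial (Fin m) R) ∣ A - B := by
    rw [hA, hB, ← Finset.sum_sub_distrib]
    apply Finset.dvd_sum
    intro i _
    obtain ⟨r, hr⟩ := h i
    refine ⟨MvPolynomial.C r * MvPolynomial.X i, ?_⟩
    rw [← sub_mul, ← MvPolynomial.C_sub, hr, map_mul, map_natCast]
    ring
  obtain ⟨Q, hQ⟩ := dvd_sub_pow_of_dvd_sub hAB e
  have hcoeff := congrArg (MvPolynomial.coeff (Finsupp.equivFunOnFinite.symm c)) hQ
  rw [MvPolynomial.coeff_sub, coeff_linear_pow m (p ^ e) c hc a,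
    coeff_linear_pow m (p ^ e) c hc b] at hcoeff
  refine ⟨MvPolynomial.coeff (Finsupp.equivFunOnFinite.symm c) Q, ?_⟩
  rw [hcoeff]
  rw [show ((p : MvPolynomial (Fin m) R)) ^ (e + 1)
      = MvPolynomial.C ((p : R) ^ (e + 1)) by rw [map_pow, map_natCast]]
  rw [MvPolynomial.coeff_C_mul]

/-- Let `p` be a prime, `R` a commutative ring, `0 ≤ j ≤ n`, and
`c₁, …, c_m` natural numbers with `c₁ + ⋯ + c_m = p ^ (n - j)`.  Let
`M = (p ^ (n - j))! / (c₁! ⋯ c_m!)` be the multinomial coefficient.  If `aᵢ ≡ bᵢ (mod p R)`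
for all `i`, then `p ^ j * M * a₁^{c₁} ⋯ a_m^{c_m} ≡ p ^ j * M * b₁^{c₁} ⋯ b_m^{c_m}`
modulo `p ^ (n + 1) R`. -/
theorem multinomial_mul_pow_congr (p : ℕ) [Fact p.Prime] (R : Type*) [CommRing R]
    (n j : ℕ) (hj : j ≤ n) (m : ℕ) (c : Fin m → ℕ)
    (hc : ∑ i, c i = p ^ (n - j))
    (a b : Fin m → R) (hab : ∀ i, a i - b i ∈ Ideal.span {(p : R)}) :
    (p : R) ^ j * (Nat.multinomial Finset.univ c : R) * ∏ i, a i ^ c i -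
        (p : R) ^ j * (Nat.multinomial Finset.univ c : R) * ∏ i, b i ^ c i
      ∈ Ideal.span {(p : R) ^ (n + 1)} := by
  have h : ∀ i, (p : R) ∣ a i - b i := fun i =>
    Ideal.mem_span_singleton.mp (hab i)
  obtain ⟨q, hq⟩ := key_dvd p (n - j) m c hc a b h
  rw [Ideal.mem_span_singleton]
  refine ⟨q, ?_⟩
  have : (p : R) ^ (n + 1) = (p : R) ^ j * (p : R) ^ (n - j + 1) := by
    rw [← pow_add]
    congr 1
    omega
  calc (p : R) ^ j * (Nat.multinomial Finset.univ c : R) * ∏ i, a i ^ c i -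
        (p : R) ^ j * (Nat.multinomial Finset.univ c : R) * ∏ i, b i ^ c i
      = (p : R) ^ j * ((Nat.multinomial Finset.univ c : R) * ∏ i, a i ^ c i -
          (Nat.multinomial Finset.univ c : R) * ∏ i, b i ^ c i) := by ring
    _ = (p : R) ^ j * ((p : R) ^ (n - j + 1) * q) := by rw [hq]
    _ = (p : R) ^ (n + 1) * q := by rw [this]; ring
end

section
/- Let R be a commutative ring and A a commutative R-algebra whose underlying additive group is torsion-free. Let (∂^{[r]})_{r∈ℕ} be a family of additive endomorphisms of A with ∂^{[0]} = id_A, such that ∂^{[1]} is an R-linear derivation of A and ∂^{[r]} ∘ ∂^{[s]} = binom(r+s, r)·∂^{[r+s]} for all r, s ∈ ℕ. Then: (i) each ∂^{[r]} is determined by ∂^{[1]} (any two such families with the same ∂^{[1]} coincide); (ii) the Leibniz formula ∂^{[r]}(xy) = Σ_{i=0}^r ∂^{[i]}(x)·∂^{[r−i]}(y) holds for all x, y ∈ A and r ∈ ℕ; equivalently, for each r the map A → A[ε]/(ε^{r+1}) sending x to Σ_{i=0}^r ∂^{[i]}(x)·ε^i is an R-algebra homomorphism restricting to the identity modulo ε.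 -/
/-- Let `R` be a commutative ring and `A` a commutative `R`-algebra whose
additive group is torsion-free.  Let `(∂^{[r]})_r` be a family of additive endomorphisms of
`A` with `∂^{[0]} = id`, `∂^{[1]}` an `R`-linear derivation, and
`∂^{[r]} ∘ ∂^{[s]} = (r+s choose r) · ∂^{[r+s]}`.  Then (i) the family is determined by
`∂^{[1]}`, and (ii) the Hasse–Schmidt Leibniz formula
`∂^{[r]}(xy) = ∑_{i=0}^{r} ∂^{[i]} x · ∂^{[r-i]} y` holds. -/
theorem hasseSchmidt_determined_and_leibniz (R A : Type*) [CommRing R] [CommRing A]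
    [Algebra R A] [NoZeroSMulDivisors ℤ A]
    (D : ℕ → A → A)
    (hadd : ∀ r x y, D r (x + y) = D r x + D r y)
    (h0 : D 0 = id)
    (hlin : ∀ (c : R) (x : A), D 1 (c • x) = c • D 1 x)
    (hder : ∀ x y : A, D 1 (x * y) = x * D 1 y + y * D 1 x)
    (hcomp : ∀ (r s : ℕ) (x : A), D r (D s x) = ((r + s).choose r : ℕ) • D (r + s) x) :
    (∀ D' : ℕ → A → A,
        (∀ r x y, D' r (x + y) = D' r x + D' r y) →
        D' 0 = id →
        (∀ (c : R) (x : A), D' 1 (c • x) = c • D' 1 x) →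
        (∀ x y : A, D' 1 (x * y) = x * D' 1 y + y * D' 1 x) →
        (∀ (r s : ℕ) (x : A), D' r (D' s x) = ((r + s).choose r : ℕ) • D' (r + s) x) →
        D' 1 = D 1 → D' = D) ∧
    (∀ (r : ℕ) (x y : A),
        D r (x * y) = ∑ i ∈ Finset.range (r + 1), D i x * D (r - i) y) := by
  -- cancellation of (n+1) • _ using torsion-freeness
  have hcancel : ∀ (n : ℕ) (a b : A), (n + 1) • a = (n + 1) • b → a = b := by
    intro n a b h
    have h' : ((n + 1 : ℕ) : ℤ) • a = ((n + 1 : ℕ) : ℤ) • b := by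
      rw [natCast_zsmul, natCast_zsmul]; exact h
    exact smul_right_injective A (by exact_mod_cast Nat.succ_ne_zero n) h'
  -- key recursion
  have hkey : ∀ (s : ℕ) (x : A), D 1 (D s x) = (s + 1) • D (s + 1) x := by
    intro s x
    have h := hcomp 1 s x
    rw [Nat.add_comm 1 s, Nat.choose_one_right] at h
    simpa using h
  constructor
  · intro D' hadd' h0' hlin' hder' hcomp' h1
    have hkey' : ∀ (s : ℕ) (x : A), D' 1 (D' s x) = (s + 1) • D' (s + 1) x := by
      intro s x
      have h := hcomp' 1 s x
      rw [Nat.add_comm 1 s, Nat.choose_one_right] at h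
      simpa using h
    funext r
    induction r with
    | zero => rw [h0', h0]
    | succ n ih =>
      funext x
      apply hcancel n
      rw [← hkey, ← hkey', ih, h1]
  · intro r x y
    induction r with
    | zero => simp [h0]
    | succ r ih =>
      set D1 : A →+ A := AddMonoidHom.mk' (D 1) (hadd 1) with hD1
      apply hcancel r
      have step1 : (r + 1) • D (r + 1) (x * y)
          = ∑ i ∈ Finset.range (r + 1),
              ((r + 1 - i) • (D i x * D (r + 1 - i) y)
                + (i + 1) • (D (i + 1) x * D (r + 1 - (i + 1)) y)) := by
        rw [← hkey, ih, show D 1 = ⇑D1 from rfl, map_sum]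
        refine Finset.sum_congr rfl fun i hi => ?_
        have hi' : i ≤ r := Nat.lt_succ_iff.mp (Finset.mem_range.mp hi)
        show D 1 (D i x * D (r - i) y) = _
        rw [hder, hkey, hkey]
        have e1 : r - i + 1 = r + 1 - i := by omega
        have e2 : r + 1 - (i + 1) = r - i := by omega
        rw [e1, e2, mul_smul_comm, mul_smul_comm, mul_comm (D (r - i) y)]
      rw [step1, Finset.sum_add_distrib]
      -- extend the first sum to range (r+2)
      have hA : ∑ i ∈ Finset.range (r + 1), (r + 1 - i) • (D i x * D (r + 1 - i) y)
          = ∑ i ∈ Finset.range (r + 2), (r + 1 - i) • (D i x * D (r + 1 - i) y) := by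
        rw [Finset.sum_range_succ (fun i => (r + 1 - i) • (D i x * D (r + 1 - i) y)) (r + 1),
          Nat.sub_self, zero_smul, add_zero]
      -- reindex the second sum
      have hB : ∑ i ∈ Finset.range (r + 1), (i + 1) • (D (i + 1) x * D (r + 1 - (i + 1)) y)
          = ∑ i ∈ Finset.range (r + 2), i • (D i x * D (r + 1 - i) y) := by
        rw [Finset.sum_range_succ' (fun i => i • (D i x * D (r + 1 - i) y)) (r + 1),
          zero_smul, add_zero]
      rw [hA, hB, ← Finset.sum_add_distrib, Finset.smul_sum]
      refine Finset.sum_congr rfl fun i hi => ?_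
      have hi' : i ≤ r + 1 := Nat.lt_succ_iff.mp (Finset.mem_range.mp hi)
      rw [← add_smul]
      congr 1
      omega
end
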